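/- arXiv:1801.09320 — 5 statements merged into one kernel-verified Lean document; each statement's English description precedes it below -/
import Mathlib

section
/- Let p ≥ 3 be odd, m, ℓ ∈ ℕ with ℓ ≥ 1, let v be an m-vertex of the pillow P, K the union of all m-edges meeting v, and Ω the interior of the union of all (m+ℓ)-tiles meeting K. Then Ω contains the open p^{-(m+ℓ)}-neighborhood of K. -/
/-!
Write `δ = p^{-(m+ℓ)}`. Each arm of the cross `K` is a rectangle whose corners lie on the
`δ`-grid. If `x` lies in such a rectangle `R` and `|y - x| < δ`, then in each coordinate the
`δ`-cell containing `y` still meets the projection of `R`, because the endpoints of that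
projection are grid points; so some `δ`-tile containing `y` meets `R ⊆ K`. The open `δ`-ball
around `x` therefore lies in the union of the tiles meeting `K`, hence in its interior `Ω`.
-/

noncomputable section

/-- The Euclidean plane, the universal unfolding of the pillow `P` (the pillow is the
quotient of `ℝ²` by the wallpaper group generated by the reflections in the grid lines,
and all sets appearing below are local unfolded models of the corresponding sets in `P`). -/
abbrev E2 := EuclideanSpace ℝ (Fin 2)

/-- The (closed) `n`-tile with address `(i,j) ∈ ℤ²`: a square of side `p^{-n}`. -/
def tileE (p n : ℕ) (i j : ℤ) : Set E2 :=
  {z | z 0 ∈ Set.Icc ((i : ℝ) / (p : ℝ) ^ n) (((i : ℝ) + 1) / (p : ℝ) ^ n) ∧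
       z 1 ∈ Set.Icc ((j : ℝ) / (p : ℝ) ^ n) (((j : ℝ) + 1) / (p : ℝ) ^ n)}

/-- `K`: the union of all `m`-edges meeting the `m`-vertex `v = (a p^{-m}, b p^{-m})`
(the "cross" at `v`). -/
def crossK (p m : ℕ) (a b : ℤ) : Set E2 :=
  {z | (z 0 = (a : ℝ) / (p : ℝ) ^ m ∧ |z 1 - (b : ℝ) / (p : ℝ) ^ m| ≤ 1 / (p : ℝ) ^ m) ∨
       (z 1 = (b : ℝ) / (p : ℝ) ^ m ∧ |z 0 - (a : ℝ) / (p : ℝ) ^ m| ≤ 1 / (p : ℝ) ^ m)}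

/-- `Ω`: the interior of the union of all `(m+ℓ)`-tiles that meet `K`. -/
def OmegaSet (p m ℓ : ℕ) (a b : ℤ) : Set E2 :=
  interior (⋃ i : ℤ, ⋃ j : ℤ,
    {z | z ∈ tileE p (m + ℓ) i j ∧ (tileE p (m + ℓ) i j ∩ crossK p m a b).Nonempty})

open Set Metric

lemma exists_Icc_div_mem_inter_nonempty {P : ℝ} (hP : 0 < P) {c d : ℤ} {x y : ℝ}
    (hx : x ∈ Icc (c / P) (d / P)) (hxy : |y - x| < 1 / P) :
    ∃ j : ℤ, y ∈ Icc (j / P) ((j + 1) / P) ∧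
      (Icc ((j : ℝ) / P) ((j + 1) / P) ∩ Icc (c / P) (d / P)).Nonempty := by
  obtain ⟨hcx, hxd⟩ := hx
  rw [div_le_iff₀ hP] at hcx
  rw [le_div_iff₀ hP] at hxd
  rw [abs_sub_lt_iff, lt_div_iff₀ hP, lt_div_iff₀ hP] at hxy
  set j := ⌊y * P⌋
  have hj : (j : ℝ) ≤ y * P := Int.floor_le _
  have hj' : y * P < j + 1 := Int.lt_floor_add_one _
  have hcj : c ≤ j + 1 := by
    have : (c : ℝ) < j + 2 := by linarith
    have : c < j + 2 := by exact_mod_cast this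
    omega
  have hjd : j ≤ d := by
    have : (j : ℝ) < d + 1 := by linarith
    have : j < d + 1 := by exact_mod_cast this
    omega
  have hcd : c ≤ d := by exact_mod_cast hcx.trans hxd
  refine ⟨j, ⟨(div_le_iff₀ hP).2 hj, (le_div_iff₀ hP).2 hj'.le⟩, (max j c : ℤ) / P, ?_, ?_⟩ <;>
    simp only [mem_Icc, div_le_div_iff_of_pos_right hP] <;> push_cast
  · exact ⟨mod_cast le_max_left j c, mod_cast max_le (by omega) hcj⟩
  · exact ⟨mod_cast le_max_right j c, mod_cast max_le hjd hcd⟩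

def gridRect (p n : ℕ) (c₀ d₀ c₁ d₁ : ℤ) : Set E2 :=
  {z | z 0 ∈ Icc ((c₀ : ℝ) / (p : ℝ) ^ n) ((d₀ : ℝ) / (p : ℝ) ^ n) ∧
       z 1 ∈ Icc ((c₁ : ℝ) / (p : ℝ) ^ n) ((d₁ : ℝ) / (p : ℝ) ^ n)}

lemma ball_subset_iUnion_tileE_of_mem_gridRect {p n : ℕ} (hp : 0 < p) {c₀ d₀ c₁ d₁ : ℤ}
    {S : Set E2} (hS : gridRect p n c₀ d₀ c₁ d₁ ⊆ S) {x : E2}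
    (hx : x ∈ gridRect p n c₀ d₀ c₁ d₁) :
    ball x (1 / (p : ℝ) ^ n) ⊆
      ⋃ i : ℤ, ⋃ j : ℤ, {z | z ∈ tileE p n i j ∧ (tileE p n i j ∩ S).Nonempty} := by
  intro y hy
  have hP : (0 : ℝ) < (p : ℝ) ^ n := by positivity
  have hcoord (k : Fin 2) : |y k - x k| < 1 / (p : ℝ) ^ n :=
    (PiLp.dist_apply_le y x k).trans_lt (mem_ball.1 hy)
  obtain ⟨i, hyi, u, hu, hu'⟩ := exists_Icc_div_mem_inter_nonempty hP hx.1 (hcoord 0)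
  obtain ⟨j, hyj, v, hv, hv'⟩ := exists_Icc_div_mem_inter_nonempty hP hx.2 (hcoord 1)
  exact mem_iUnion₂.2 ⟨i, j, ⟨hyi, hyj⟩, !₂[u, v], ⟨hu, hv⟩, hS ⟨hu', hv'⟩⟩

lemma intCast_mul_pow_div_pow_add {p : ℕ} (hp : p ≠ 0) (m ℓ : ℕ) (c : ℤ) :
    ((c * (p : ℤ) ^ ℓ : ℤ) : ℝ) / (p : ℝ) ^ (m + ℓ) = c / (p : ℝ) ^ m := by
  have : (p : ℝ) ≠ 0 := Nat.cast_ne_zero.2 hp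
  push_cast
  rw [pow_add]
  field_simp

lemma abs_sub_div_le_one_div_iff {q : ℝ} (z : ℝ) (b : ℤ) :
    |z - b / q| ≤ 1 / q ↔ z ∈ Icc (((b - 1 : ℤ) : ℝ) / q) (((b + 1 : ℤ) : ℝ) / q) := by
  push_cast
  rw [abs_sub_le_iff, sub_div, add_div, mem_Icc]
  constructor <;> rintro ⟨h₁, h₂⟩ <;> constructor <;> linarith

lemma crossK_eq_union_gridRect {p : ℕ} (hp : p ≠ 0) (m ℓ : ℕ) (a b : ℤ) :
    crossK p m a b =
      gridRect p (m + ℓ) (a * p ^ ℓ) (a * p ^ ℓ) ((b - 1) * p ^ ℓ) ((b + 1) * p ^ ℓ) ∪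
      gridRect p (m + ℓ) ((a - 1) * p ^ ℓ) ((a + 1) * p ^ ℓ) (b * p ^ ℓ) (b * p ^ ℓ) := by
  ext z
  simp only [crossK, gridRect, intCast_mul_pow_div_pow_add hp, Icc_self, mem_singleton_iff,
    abs_sub_div_le_one_div_iff, mem_union]
  exact or_congr Iff.rfl and_comm

theorem stmt7_general (p m ℓ : ℕ) (hp : 3 ≤ p) (a b : ℤ) :
    ∀ x ∈ crossK p m a b,
      Metric.ball x (1 / (p : ℝ) ^ (m + ℓ)) ⊆ OmegaSet p m ℓ a b := by
  intro x hx
  refine interior_maximal ?_ isOpen_ball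
  have hK := crossK_eq_union_gridRect (by omega : p ≠ 0) m ℓ a b
  rw [hK] at hx
  rcases hx with hx | hx
  · exact ball_subset_iUnion_tileE_of_mem_gridRect (by omega) (hK ▸ subset_union_left) hx
  · exact ball_subset_iUnion_tileE_of_mem_gridRect (by omega) (hK ▸ subset_union_right) hx

/-- `Ω` contains the open `p^{-(m+ℓ)}`-neighborhood of `K`. -/
theorem stmt7 (p m ℓ : ℕ) (hp : 3 ≤ p) (hodd : Odd p) (hℓ : 1 ≤ ℓ) (a b : ℤ) :
    ∀ x ∈ crossK p m a b,
      Metric.ball x (1 / (p : ℝ) ^ (m + ℓ)) ⊆ OmegaSet p m ℓ a b :=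
  stmt7_general p m ℓ hp a b
end
end

section
/- Let f: S² → S² be a finite-to-one open continuous surjective map (branched covering) of a topological 2-sphere and J ⊆ S² a Jordan curve. Then f⁻¹(J) has finitely many connected components, and f maps each component onto J. -/
/-
Let `K = f⁻¹(J)`. Restricted to `K → J`, the map `f` is still continuous and open, and `K` is
compact. Hence the image of a nonempty clopen subset of `K` is clopen in the connected curve `J`,
so it is all of `J`. In a compact Hausdorff space a connected component is the intersection of
its clopen neighbourhoods, so by compactness a component missing the fibre over some `y ∈ J`
would have a clopen neighbourhood missing it too; thus every component of `K` maps onto `J`.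
In particular every component meets the finite fibre over one fixed point of `J`, so there are
finitely many components.
-/

noncomputable section

/-- `J` is a Jordan curve: the homeomorphic image of a circle. -/
def IsJordanCurve {X : Type*} [TopologicalSpace X] (J : Set X) : Prop :=
  ∃ φ : (Metric.sphere (0 : EuclideanSpace ℝ (Fin 2)) 1) → X,
    Continuous φ ∧ Function.Injective φ ∧ Set.range φ = J

section

open Set

variable {X Y : Type*} [TopologicalSpace X] [TopologicalSpace Y]

theorem IsClopen.image_eq_univ [CompactSpace X] [T2Space Y] [ConnectedSpace Y] {g : X → Y}
    (hc : Continuous g) (ho : IsOpenMap g) {Z : Set X} (hZ : IsClopen Z) (hne : Z.Nonempty) :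
    g '' Z = univ :=
  IsClopen.eq_univ ⟨(hZ.isClosed.isCompact.image hc).isClosed, ho Z hZ.isOpen⟩ (hne.image g)

theorem exists_isClopen_mem_subset_of_connectedComponent_subset [CompactSpace X] [T2Space X]
    {x : X} {U : Set X} (hU : IsOpen U) (h : connectedComponent x ⊆ U) :
    ∃ V : Set X, IsClopen V ∧ x ∈ V ∧ V ⊆ U := by
  let ι := { V : Set X // IsClopen V ∧ x ∈ V }
  have : Nonempty ι := ⟨⟨univ, isClopen_univ, mem_univ x⟩⟩
  have hdisj : Uᶜ ∩ ⋂ V : ι, V.1 = ∅ := by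
    rw [← connectedComponent_eq_iInter_isClopen]
    exact disjoint_iff_inter_eq_empty.mp (disjoint_compl_left_iff_subset.mpr h)
  have hdir : Directed (· ⊇ ·) fun V : ι => V.1 := fun V W =>
    ⟨⟨V.1 ∩ W.1, V.2.1.inter W.2.1, V.2.2, W.2.2⟩, inter_subset_left, inter_subset_right⟩
  obtain ⟨V, hV⟩ := hU.isClosed_compl.isCompact.elim_directed_family_closed _
    (fun V : ι => V.2.1.isClosed) hdisj hdir
  exact ⟨V.1, V.2.1, V.2.2, fun v hv => by_contra fun hvU => hV.subset ⟨hvU, hv⟩⟩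

theorem image_connectedComponent_eq_univ [CompactSpace X] [T2Space X] [T2Space Y]
    [ConnectedSpace Y] {g : X → Y} (hc : Continuous g) (ho : IsOpenMap g) (x : X) :
    g '' connectedComponent x = univ := by
  refine eq_univ_of_forall fun y => by_contra fun hy => ?_
  have hmiss : connectedComponent x ⊆ (g ⁻¹' {y})ᶜ := fun a ha hay => hy ⟨a, ha, hay⟩
  obtain ⟨V, hV, hxV, hVy⟩ := exists_isClopen_mem_subset_of_connectedComponent_subset
    (isClosed_singleton.preimage hc).isOpen_compl hmiss
  obtain ⟨v, hv, hvy⟩ : y ∈ g '' V := (hV.image_eq_univ hc ho ⟨x, hxV⟩).symm ▸ mem_univ y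
  exact hVy hv hvy

theorem IsOpenMap.image_connectedComponentIn_preimage [CompactSpace X] [T2Space X] [T2Space Y]
    {f : X → Y} (hc : Continuous f) (ho : IsOpenMap f) {J : Set Y} (hJc : IsCompact J)
    (hJ : IsConnected J) {x : X} (hx : x ∈ f ⁻¹' J) :
    f '' connectedComponentIn (f ⁻¹' J) x = J := by
  have : CompactSpace (f ⁻¹' J) :=
    isCompact_iff_compactSpace.mp (hJc.isClosed.preimage hc).isCompact
  have : ConnectedSpace J := Subtype.connectedSpace hJ
  have hsurj := image_connectedComponent_eq_univ hc.restrictPreimage (ho.restrictPreimage J)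
    ⟨x, hx⟩
  rw [connectedComponentIn_eq_image hx, image_image]
  change (Subtype.val ∘ J.restrictPreimage f) '' _ = J
  rw [image_comp, hsurj, image_univ, Subtype.range_coe]

theorem finite_connectedComponentIn_of_forall_exists_mem {S F : Set X} (hF : F.Finite)
    (hmeet : ∀ x ∈ S, ∃ z ∈ F, z ∈ connectedComponentIn S x) :
    {C : Set X | ∃ x ∈ S, C = connectedComponentIn S x}.Finite := by
  refine (hF.image (connectedComponentIn S)).subset ?_
  rintro C ⟨x, hx, rfl⟩
  obtain ⟨z, hzF, hz⟩ := hmeet x hx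
  exact ⟨z, hzF, (connectedComponentIn_eq hz).symm⟩

end

theorem stmt10_general {X : Type*} [TopologicalSpace X]
    (hX : Nonempty (X ≃ₜ Metric.sphere (0 : EuclideanSpace ℝ (Fin 3)) 1))
    (f : X → X) (hc : Continuous f) (ho : IsOpenMap f)
    (hfin : ∀ y : X, (f ⁻¹' {y}).Finite)
    (J : Set X) (hJ : IsJordanCurve J) :
    {C : Set X | ∃ x ∈ f ⁻¹' J, C = connectedComponentIn (f ⁻¹' J) x}.Finite ∧
    ∀ C ∈ {C : Set X | ∃ x ∈ f ⁻¹' J, C = connectedComponentIn (f ⁻¹' J) x},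
      f '' C = J := by
  obtain ⟨e⟩ := hX
  have : CompactSpace X := e.symm.compactSpace
  have : T2Space X := e.isEmbedding.t2Space
  obtain ⟨φ, hφc, -, rfl⟩ := hJ
  have : ConnectedSpace (Metric.sphere (0 : EuclideanSpace ℝ (Fin 2)) 1) :=
    Subtype.connectedSpace <| isConnected_sphere
      (Module.one_lt_rank_of_one_lt_finrank (by simp)) 0 zero_le_one
  have hJ : IsConnected (Set.range φ) := isConnected_range hφc
  have hC (x) (hx : x ∈ f ⁻¹' Set.range φ) :
      f '' connectedComponentIn (f ⁻¹' Set.range φ) x = Set.range φ :=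
    ho.image_connectedComponentIn_preimage hc (isCompact_range hφc) hJ hx
  refine ⟨?_, fun C ⟨x, hx, hCx⟩ => hCx ▸ hC x hx⟩
  obtain ⟨y, hy⟩ := hJ.nonempty
  refine finite_connectedComponentIn_of_forall_exists_mem (hfin y) fun x hx => ?_
  obtain ⟨z, hz, hzy⟩ := (hC x hx).symm ▸ hy
  exact ⟨z, hzy, hz⟩

/-- Let `f : S² → S²` be a branched covering map (continuous, open, surjective and
finite-to-one) of a topological 2-sphere, and `J ⊆ S²` a Jordan curve.  Then `f⁻¹(J)`
has finitely many connected components, and `f` maps each component onto `J`. -/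
theorem stmt10 {X : Type*} [TopologicalSpace X]
    (hX : Nonempty (X ≃ₜ Metric.sphere (0 : EuclideanSpace ℝ (Fin 3)) 1))
    (f : X → X) (hc : Continuous f) (ho : IsOpenMap f) (hs : Function.Surjective f)
    (hfin : ∀ y : X, (f ⁻¹' {y}).Finite)
    (J : Set X) (hJ : IsJordanCurve J) :
    {C : Set X | ∃ x ∈ f ⁻¹' J, C = connectedComponentIn (f ⁻¹' J) x}.Finite ∧
    ∀ C ∈ {C : Set X | ∃ x ∈ f ⁻¹' J, C = connectedComponentIn (f ⁻¹' J) x},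
      f '' C = J :=
  stmt10_general hX f hc ho hfin J hJ
end
end

section
/- Let f: S² → S² be a branched covering map admissible for a Sierpiński carpet Z ⊆ S², and J a peripheral circle of Z. Then f⁻¹(J) ∩ Z is contained in a union of finitely many peripheral circles of Z. -/
open scoped NNReal

noncomputable section

/-- Membership in the standard square Sierpiński `p`-carpet via digit expansions. -/
def SpPair (p : ℕ) (x y : ℝ) : Prop :=
  ∃ a b : ℕ → ℕ,
    (∀ k, a k < p ∧ b k < p ∧ ¬(a k = (p - 1) / 2 ∧ b k = (p - 1) / 2)) ∧
    x = ∑' k : ℕ, (a k : ℝ) / (p : ℝ) ^ (k + 1) ∧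
    y = ∑' k : ℕ, (b k : ℝ) / (p : ℝ) ^ (k + 1)

/-- The standard square Sierpiński `p`-carpet `S_p ⊆ [0,1]²`. -/
def Sp (p : ℕ) : Set (ℝ × ℝ) := {z | SpPair p z.1 z.2}

/-- A Sierpiński carpet: a set homeomorphic to the standard Sierpiński carpet `S₃`. -/
def IsCarpet {X : Type*} [TopologicalSpace X] (Z : Set X) : Prop :=
  Nonempty (↥Z ≃ₜ ↥(Sp 3))

/-- `C` is a peripheral circle of `Z`. -/
def IsPeripheralCircle {X : Type*} [TopologicalSpace X] (Z C : Set X) : Prop :=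
  ∃ x ∉ Z, C = frontier (connectedComponentIn Zᶜ x)

/-- A Jordan region: an open connected set bounded by a Jordan curve. -/
def IsJordanRegion {X : Type*} [TopologicalSpace X] (U : Set X) : Prop :=
  IsOpen U ∧ IsConnected U ∧ IsJordanCurve (frontier U)

/-- `f` is quasisymmetric on `V`: there is a distortion homeomorphism `η` of `[0,∞)`
controlling ratios of distances of triples of distinct points of `V`. -/
def QSOn {X : Type*} [MetricSpace X] (f : X → X) (V : Set X) : Prop :=
  ∃ η : ℝ≥0 ≃o ℝ≥0, ∀ x ∈ V, ∀ y ∈ V, ∀ z ∈ V, x ≠ y → x ≠ z → y ≠ z →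
    nndist (f x) (f y) / nndist (f x) (f z) ≤ η (nndist x y / nndist x z)

/-- `x ∈ Z` is a good point for `f` and `Z`: there are Jordan regions `V ∋ x` and
`W = f(V)` such that `f|V : V → W` is a quasisymmetric homeomorphism with
`f(V ∩ Z) = W ∩ Z`. -/
def IsGoodPoint {X : Type*} [MetricSpace X] (Z : Set X) (f : X → X) (x : X) : Prop :=
  ∃ V W : Set X, x ∈ V ∧ IsJordanRegion V ∧ IsJordanRegion W ∧
    f '' V = W ∧ Set.InjOn f V ∧ ContinuousOn f V ∧ QSOn f V ∧
    f '' (V ∩ Z) = W ∩ Z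

/-- A branched covering map of the sphere: continuous, open, surjective, finite-to-one. -/
def IsBranchedCovering {X : Type*} [TopologicalSpace X] (f : X → X) : Prop :=
  Continuous f ∧ IsOpenMap f ∧ Function.Surjective f ∧ ∀ y : X, (f ⁻¹' {y}).Finite

/-- `f` is admissible for the Sierpiński carpet `Z`: `f(Z) ⊆ Z` and every point of `Z`
outside an exceptional set (contained in the union of a finite set and finitely many
peripheral circles) is a good point. -/
def IsAdmissible {X : Type*} [MetricSpace X] (Z : Set X) (f : X → X) : Prop :=
  IsBranchedCovering f ∧ f '' Z ⊆ Z ∧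
  ∃ (F : Set X) (𝒞 : Set (Set X)), F.Finite ∧ 𝒞.Finite ∧
    (∀ C ∈ 𝒞, IsPeripheralCircle Z C) ∧
    ∀ x ∈ Z \ (F ∪ ⋃₀ 𝒞), IsGoodPoint Z f x

/-!
Let `U` be the complementary component of `Z` bounded by `J` and pick `x₀ ∈ U`. Since `f` is open
and closed (the sphere is compact), `f` maps every component of `f⁻¹(U)` onto `U`, so each such
component contains one of the finitely many preimages of `x₀`. As `f(Z) ⊆ Z`, each component of
`f⁻¹(U)` lies in a complementary component of `Z`, and a point of `f⁻¹(J) ∩ Z` lies in the closure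
of `f⁻¹(U)`, hence on the boundary of one of these finitely many complementary components.
-/

open Set

def digitsToReal (p : ℕ) (d : ℕ → Fin p) : ℝ := ∑' k, ((d k : ℕ) : ℝ) / (p : ℝ) ^ (k + 1)

lemma continuous_digitsToReal {p : ℕ} (hp : 2 ≤ p) : Continuous (digitsToReal p) := by
  have hp' : (1 : ℝ) < p := by exact_mod_cast hp
  refine continuous_tsum (u := fun k => (p : ℝ)⁻¹ ^ k) (fun k => by fun_prop)
    (summable_geometric_of_lt_one (by positivity) (inv_lt_one_of_one_lt₀ hp')) fun k d => ?_
  have hd : ((d k : ℕ) : ℝ) ≤ p := by exact_mod_cast (d k).isLt.le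
  calc ‖((d k : ℕ) : ℝ) / (p : ℝ) ^ (k + 1)‖ = ((d k : ℕ) : ℝ) / (p : ℝ) ^ (k + 1) :=
        Real.norm_of_nonneg (by positivity)
    _ ≤ p / (p : ℝ) ^ (k + 1) := by gcongr
    _ = (p : ℝ)⁻¹ ^ k := by rw [pow_succ, inv_pow]; field_simp

lemma Sp_eq_image (p : ℕ) :
    Sp p = (fun q : ℕ → Fin p × Fin p =>
        (digitsToReal p (Prod.fst ∘ q), digitsToReal p (Prod.snd ∘ q))) ''
      univ.pi fun _ => {v | ¬((v.1 : ℕ) = (p - 1) / 2 ∧ (v.2 : ℕ) = (p - 1) / 2)} := by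
  ext ⟨x, y⟩
  constructor
  · rintro ⟨a, b, hab, rfl, rfl⟩
    exact ⟨fun k => (⟨a k, (hab k).1⟩, ⟨b k, (hab k).2.1⟩), fun k _ => (hab k).2.2, rfl⟩
  · rintro ⟨q, hq, hxy⟩
    obtain ⟨rfl, rfl⟩ := Prod.ext_iff.mp hxy
    exact ⟨fun k => (q k).1, fun k => (q k).2,
      fun k => ⟨(q k).1.isLt, (q k).2.isLt, hq k (mem_univ k)⟩, rfl, rfl⟩

lemma isCompact_Sp {p : ℕ} (hp : 2 ≤ p) : IsCompact (Sp p) := by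
  rw [Sp_eq_image]
  exact (isCompact_univ_pi fun _ => (toFinite _).isCompact).image
    (((continuous_digitsToReal hp).comp (by fun_prop)).prodMk
      ((continuous_digitsToReal hp).comp (by fun_prop)))

lemma IsCarpet.isCompact {X : Type*} [TopologicalSpace X] {Z : Set X} (hZ : IsCarpet Z) :
    IsCompact Z := by
  obtain ⟨e⟩ := hZ
  have : CompactSpace (Sp 3) := isCompact_iff_compactSpace.mp (isCompact_Sp (by norm_num))
  exact isCompact_iff_compactSpace.mpr e.symm.compactSpace

section ConnectedComponents

variable {X Y : Type*} [TopologicalSpace X] [TopologicalSpace Y]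

lemma closure_connectedComponentIn_inter_subset [LocallyConnectedSpace X] {F : Set X}
    (hF : IsOpen F) (x : X) :
    closure (connectedComponentIn F x) ∩ F ⊆ connectedComponentIn F x := by
  rintro c ⟨hc, hcF⟩
  obtain ⟨z, hzc, hzx⟩ := mem_closure_iff.mp hc _ hF.connectedComponentIn
    (mem_connectedComponentIn hcF)
  rw [connectedComponentIn_eq hzx, ← connectedComponentIn_eq hzc]
  exact mem_connectedComponentIn hcF

variable [CompactSpace X] [LocallyConnectedSpace X] [T2Space Y] {f : X → Y} {U : Set Y} {y : Y}

/-- The image of a component `V` of `f ⁻¹' U` is open, and relatively closed in `U` because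
`f '' closure V ∩ U ⊆ f '' V`; so it is all of the connected set `U`. -/
lemma IsOpenMap.exists_mem_connectedComponentIn_preimage (hfo : IsOpenMap f)
    (hfc : Continuous f) (hU : IsOpen U) (hUc : IsPreconnected U) (hy : y ∈ U) {x : X}
    (hx : f x ∈ U) : ∃ p ∈ connectedComponentIn (f ⁻¹' U) x, f p = y := by
  set V := connectedComponentIn (f ⁻¹' U) x
  have hfV : IsOpen (f '' V) := hfo _ (hU.preimage hfc).connectedComponentIn
  have hfV' : IsClosed (f '' closure V) := (isClosed_closure.isCompact.image hfc).isClosed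
  have hclosure : f '' closure V ∩ U ⊆ f '' V := by
    rintro _ ⟨⟨c, hc, rfl⟩, hcU⟩
    exact ⟨c, closure_connectedComponentIn_inter_subset (hU.preimage hfc) x ⟨hc, hcU⟩, rfl⟩
  have hUV : U ⊆ f '' V := by
    refine hUc.subset_left_of_subset_union hfV hfV'.isOpen_compl
      (disjoint_compl_right_iff_subset.mpr (image_mono subset_closure)) (fun z hz => ?_)
      ⟨f x, hx, x, mem_connectedComponentIn hx, rfl⟩
    by_cases hz' : z ∈ f '' closure V
    · exact Or.inl (hclosure ⟨hz', hz⟩)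
    · exact Or.inr hz'
  exact hUV hy

lemma IsOpenMap.closure_preimage_subset_biUnion (hfo : IsOpenMap f) (hfc : Continuous f)
    (hU : IsOpen U) (hUc : IsPreconnected U) (hy : y ∈ U) (hfin : (f ⁻¹' {y}).Finite) :
    closure (f ⁻¹' U) ⊆ ⋃ p ∈ f ⁻¹' {y}, closure (connectedComponentIn (f ⁻¹' U) p) := by
  rw [← hfin.closure_biUnion]
  refine closure_mono fun x hx => ?_
  obtain ⟨p, hpx, hp⟩ := hfo.exists_mem_connectedComponentIn_preimage hfc hU hUc hy hx
  exact mem_biUnion hp (connectedComponentIn_eq hpx ▸ mem_connectedComponentIn hx)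

end ConnectedComponents

/-- If `f` is a branched covering map of a metric 2-sphere admissible for a Sierpiński
carpet `Z`, and `J` is a peripheral circle of `Z`, then `f⁻¹(J) ∩ Z` is contained in a
union of finitely many peripheral circles of `Z`. -/
theorem stmt13 {X : Type*} [MetricSpace X]
    (hX : Nonempty (X ≃ₜ Metric.sphere (0 : EuclideanSpace ℝ (Fin 3)) 1))
    (Z : Set X) (hZ : IsCarpet Z)
    (f : X → X) (hf : IsAdmissible Z f)
    (J : Set X) (hJ : IsPeripheralCircle Z J) :
    ∃ 𝒞 : Set (Set X), 𝒞.Finite ∧ (∀ C ∈ 𝒞, IsPeripheralCircle Z C) ∧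
      f ⁻¹' J ∩ Z ⊆ ⋃₀ 𝒞 := by
  obtain ⟨e⟩ := hX
  have : CompactSpace X := e.symm.compactSpace
  have : LocallyConnectedSpace (Metric.sphere (0 : EuclideanSpace ℝ (Fin 3)) 1) :=
    ChartedSpace.locallyConnectedSpace (EuclideanSpace ℝ (Fin 2)) _
  have : LocallyConnectedSpace X := e.locallyConnectedSpace
  obtain ⟨⟨hfc, hfo, -, hfin⟩, hfZ, -⟩ := hf
  obtain ⟨x₀, hx₀, rfl⟩ := hJ
  have hZc : IsOpen Zᶜ := hZ.isCompact.isClosed.isOpen_compl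
  set U := connectedComponentIn Zᶜ x₀
  have hUZ : f ⁻¹' U ⊆ Zᶜ := fun x hx hxZ =>
    connectedComponentIn_subset _ _ hx (hfZ (mem_image_of_mem f hxZ))
  refine ⟨(fun p => frontier (connectedComponentIn Zᶜ p)) '' (f ⁻¹' {x₀}), (hfin x₀).image _,
    ?_, ?_⟩
  · rintro _ ⟨p, hp, rfl⟩
    refine ⟨p, hUZ ?_, rfl⟩
    rw [mem_preimage, mem_singleton_iff.mp hp]
    exact mem_connectedComponentIn hx₀
  · rintro x ⟨hxJ, hxZ⟩
    have hx : x ∈ closure (f ⁻¹' U) :=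
      hfo.preimage_closure_subset_closure_preimage (frontier_subset_closure hxJ)
    obtain ⟨p, hp, hxp⟩ := mem_iUnion₂.mp <| hfo.closure_preimage_subset_biUnion hfc
      hZc.connectedComponentIn isPreconnected_connectedComponentIn (mem_connectedComponentIn hx₀)
      (hfin x₀) hx
    exact ⟨_, ⟨p, hp, rfl⟩, closure_mono (connectedComponentIn_mono p hUZ) hxp,
      fun h => connectedComponentIn_subset _ _ (interior_subset h) hxZ⟩
end
end

section
/- If {h_n} is a sequence of η-quasisymmetric embeddings of a compact metric space X into a compact metric space Y with diam(h_n(X)) ≥ α > 0 for all n, then some subsequence converges uniformly on X to a quasisymmetric embedding h: X → Y. -/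
open scoped NNReal

noncomputable section

/-- `f` is an `η`-quasisymmetric map: for all triples of distinct points,
`d(f x, f y)/d(f x, f z) ≤ η (d(x,y)/d(x,z))`. -/
def IsQS {X Y : Type*} [MetricSpace X] [MetricSpace Y]
    (η : ℝ≥0 → ℝ≥0) (f : X → Y) : Prop :=
  ∀ x y z : X, x ≠ y → x ≠ z → y ≠ z →
    nndist (f x) (f y) / nndist (f x) (f z) ≤ η (nndist x y / nndist x z)

/-- Subconvergence lemma: if `h n : X → Y` are `η`-quasisymmetric embeddings of a
compact metric space `X` into a compact metric space `Y` with
`diam (h n '' X) ≥ α > 0` for all `n`, then some subsequence converges uniformly on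
`X` to a quasisymmetric embedding `g : X → Y`. -/
theorem stmt15 {X Y : Type*} [MetricSpace X] [MetricSpace Y]
    [CompactSpace X] [CompactSpace Y]
    (η : ℝ≥0 ≃o ℝ≥0) (h : ℕ → X → Y)
    (hinj : ∀ n, Function.Injective (h n)) (hqs : ∀ n, IsQS (⇑η) (h n))
    (α : ℝ) (hα : 0 < α) (hdiam : ∀ n, α ≤ Metric.diam (Set.range (h n))) :
    ∃ φ : ℕ → ℕ, StrictMono φ ∧ ∃ g : X → Y, Function.Injective g ∧
      (∃ η' : ℝ≥0 ≃o ℝ≥0, IsQS (⇑η') g) ∧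
      TendstoUniformly (fun n => h (φ n)) g Filter.atTop := by
  classical
  -- X has two distinct points
  have hne : ∃ p q : X, p ≠ q := by
    by_contra hc
    push_neg at hc
    have hsub : (Set.range (h 0)).Subsingleton := by
      rintro _ ⟨a, rfl⟩ _ ⟨b, rfl⟩
      rw [hc a b]
    have := hdiam 0
    rw [Metric.diam_subsingleton hsub] at this
    linarith
  obtain ⟨p, q, hpq⟩ := hne
  set D : ℝ := Metric.diam (Set.univ : Set X) with hD
  have hDpos : 0 < D := by
    have h1 : dist p q ≤ D :=
      Metric.dist_le_diam_of_mem isCompact_univ.isBounded trivial trivial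
    have h2 : 0 < dist p q := dist_pos.mpr hpq
    linarith
  obtain ⟨u, v, huv⟩ : ∃ u v : X, D / 2 < dist u v := by
    by_contra hc
    push_neg at hc
    have : D ≤ D / 2 :=
      Metric.diam_le_of_forall_dist_le (by linarith) fun a _ b _ => hc a b
    linarith
  have farX : ∀ x : X, ∃ z : X, D / 4 < dist x z := by
    intro x
    rcases le_or_gt (dist x u) (D / 4) with h1 | h1
    · refine ⟨v, ?_⟩
      have ht := dist_triangle u x v
      rw [dist_comm u x] at ht
      linarith
    · exact ⟨u, h1⟩
  set d₀ : ℝ≥0 := (D / 4).toNNReal with hd₀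
  have hd₀pos : 0 < d₀ := Real.toNNReal_pos.mpr (by linarith)
  set CY : ℝ≥0 := (Metric.diam (Set.univ : Set Y)).toNNReal with hCY
  have hCYle : ∀ a b : Y, nndist a b ≤ CY := by
    intro a b
    rw [hCY, Real.le_toNNReal_iff_coe_le Metric.diam_nonneg]
    exact Metric.dist_le_diam_of_mem isCompact_univ.isBounded trivial trivial
  set D' : ℝ≥0 := D.toNNReal with hD'
  have hD'le : ∀ a b : X, nndist a b ≤ D' := by
    intro a b
    rw [hD', Real.le_toNNReal_iff_coe_le hDpos.le]
    exact Metric.dist_le_diam_of_mem isCompact_univ.isBounded trivial trivial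
  -- Claim A: uniform modulus of continuity
  have claimA : ∀ n (x y : X), nndist x y < d₀ →
      nndist (h n x) (h n y) ≤ CY * η (nndist x y / d₀) := by
    intro n x y hxy
    rcases eq_or_ne x y with rfl | hxyne
    · simp
    obtain ⟨z, hz⟩ := farX x
    have hz' : d₀ ≤ nndist x z := by
      rw [hd₀, Real.toNNReal_le_iff_le_coe]
      exact_mod_cast hz.le
    have hxz : x ≠ z := by
      intro e
      rw [e, nndist_self] at hz'
      exact absurd (lt_of_lt_of_le hd₀pos hz') (lt_irrefl _)
    have hyz : y ≠ z := by
      intro e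
      rw [e] at hxy
      exact absurd (lt_of_lt_of_le hxy hz') (lt_irrefl _)
    have key := hqs n x y z hxyne hxz hyz
    have hden : (0:ℝ≥0) < nndist (h n x) (h n z) := by
      exact pos_iff_ne_zero.mpr fun e => hxz (hinj n (nndist_eq_zero.mp e))
    rw [div_le_iff₀ hden] at key
    calc nndist (h n x) (h n y)
        ≤ η (nndist x y / nndist x z) * nndist (h n x) (h n z) := key
      _ ≤ η (nndist x y / d₀) * CY := by
          refine mul_le_mul' (η.monotone ?_) (hCYle _ _)
          gcongr
      _ = CY * η (nndist x y / d₀) := mul_comm _ _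
  -- uniform equicontinuity of the family
  have econt : ∀ ε : ℝ, 0 < ε → ∃ δ : ℝ, 0 < δ ∧
      ∀ n (x y : X), dist x y < δ → dist (h n x) (h n y) < ε := by
    intro ε hε
    set ε' : ℝ≥0 := ε.toNNReal with hε'def
    have hε' : 0 < ε' := Real.toNNReal_pos.mpr hε
    have hv : (0:ℝ≥0) < ε' / 2 / (CY + 1) := by
      rw [pos_iff_ne_zero]
      exact div_ne_zero (div_ne_zero hε'.ne' two_ne_zero) (by positivity)
    set w : ℝ≥0 := η.symm (ε' / 2 / (CY + 1)) with hw
    have hwpos : 0 < w := by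
      have h0 : η.symm 0 = 0 := by
        simpa using η.symm.map_bot
      rw [hw, ← h0]
      exact η.symm.strictMono hv
    refine ⟨(min d₀ (w * d₀) : ℝ≥0), ?_, ?_⟩
    · have : (0:ℝ≥0) < min d₀ (w * d₀) := lt_min hd₀pos (by positivity)
      exact_mod_cast this
    · intro n x y hxy
      have hxy' : nndist x y < min d₀ (w * d₀) := by
        rw [← NNReal.coe_lt_coe]
        exact_mod_cast hxy
      have h1 : nndist x y < d₀ := lt_of_lt_of_le hxy' (min_le_left _ _)
      have h2 : nndist x y / d₀ ≤ w := by
        rw [div_le_iff₀ hd₀pos]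
        exact le_of_lt (lt_of_lt_of_le hxy' (min_le_right _ _))
      have h3 : nndist (h n x) (h n y) ≤ CY * η w :=
        (claimA n x y h1).trans (mul_le_mul' le_rfl (η.monotone h2))
      have h4 : CY * η w ≤ ε' / 2 := by
        rw [hw, η.apply_symm_apply]
        calc CY * (ε' / 2 / (CY + 1)) ≤ (CY + 1) * (ε' / 2 / (CY + 1)) :=
              mul_le_mul' le_self_add le_rfl
          _ = ε' / 2 := by
              rw [mul_comm]
              exact div_mul_cancel₀ _ (by positivity)
      have h5 : nndist (h n x) (h n y) < ε' :=
        lt_of_le_of_lt (h3.trans h4) (NNReal.half_lt_self hε'.ne')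
      have h6 : dist (h n x) (h n y) < ε := by
        rw [← Real.coe_toNNReal ε hε.le]
        exact_mod_cast h5
      exact h6
  have hcont : ∀ n, Continuous (h n) := by
    intro n
    rw [Metric.continuous_iff]
    intro b ε hε
    obtain ⟨δ, hδ, H⟩ := econt ε hε
    exact ⟨δ, hδ, fun a' ha' => H n a' b ha'⟩
  set fn : ℕ → BoundedContinuousFunction X Y := fun n =>
    BoundedContinuousFunction.mkOfCompact ⟨h n, hcont n⟩ with hfn
  set A : Set (BoundedContinuousFunction X Y) := Set.range fn with hA
  have equiA : Equicontinuous ((↑) : A → X → Y) := by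
    intro x₀
    rw [Metric.equicontinuousAt_iff]
    intro ε hε
    obtain ⟨δ, hδ, H⟩ := econt ε hε
    refine ⟨δ, hδ, fun x hx i => ?_⟩
    obtain ⟨n, hn⟩ := i.2
    have hcoe : ⇑(i : BoundedContinuousFunction X Y) = h n := by rw [← hn]; rfl
    rw [hcoe, dist_comm]
    exact H n x x₀ hx
  have hclcomp : IsCompact (closure A) :=
    BoundedContinuousFunction.arzela_ascoli₁ (closure A) isClosed_closure
      (equiA.closure' BoundedContinuousFunction.continuous_coe)
  obtain ⟨G, hGmem, φ, hφ, hconv⟩ :=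
    hclcomp.isSeqCompact (fun n => subset_closure (Set.mem_range_self n))
  have huni : TendstoUniformly (fun n => h (φ n)) (⇑G) Filter.atTop :=
    BoundedContinuousFunction.tendsto_iff_tendstoUniformly.mp hconv
  have ptw : ∀ x : X, Filter.Tendsto (fun n => h (φ n) x) Filter.atTop (nhds (G x)) :=
    fun x => huni.tendsto_at x
  set a : ℝ≥0 := (α / 4).toNNReal with ha'
  have hapos : 0 < a := Real.toNNReal_pos.mpr (by linarith)
  have claimB : ∀ n (x y : X), x ≠ y →
      a ≤ nndist (h n x) (h n y) * max 1 (η (D' / nndist x y)) := by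
    intro n x y hxy
    obtain ⟨u', v', huv'⟩ : ∃ u' v' : X, α / 2 < dist (h n u') (h n v') := by
      by_contra hc
      push_neg at hc
      have hle : Metric.diam (Set.range (h n)) ≤ α / 2 := by
        refine Metric.diam_le_of_forall_dist_le (by linarith) ?_
        rintro _ ⟨a', rfl⟩ _ ⟨b', rfl⟩
        exact hc a' b'
      linarith [hdiam n]
    obtain ⟨z, hz⟩ : ∃ z : X, α / 4 < dist (h n x) (h n z) := by
      rcases le_or_gt (dist (h n x) (h n u')) (α / 4) with h1 | h1
      · refine ⟨v', ?_⟩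
        have ht := dist_triangle (h n u') (h n x) (h n v')
        rw [dist_comm (h n u') (h n x)] at ht
        linarith
      · exact ⟨u', h1⟩
    have haz : a ≤ nndist (h n x) (h n z) := by
      rw [ha', Real.toNNReal_le_iff_le_coe]
      exact_mod_cast hz.le
    have hzx : x ≠ z := by
      rintro rfl
      rw [nndist_self] at haz
      exact absurd (lt_of_lt_of_le hapos haz) (lt_irrefl _)
    rcases eq_or_ne z y with rfl | hzy
    · exact haz.trans (le_mul_of_one_le_right' (le_max_left _ _))
    · have key := hqs n x z y hzx hxy hzy
      have hden : (0:ℝ≥0) < nndist (h n x) (h n y) :=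
        pos_iff_ne_zero.mpr fun e => hxy (hinj n (nndist_eq_zero.mp e))
      rw [div_le_iff₀ hden] at key
      calc a ≤ nndist (h n x) (h n z) := haz
        _ ≤ η (nndist x z / nndist x y) * nndist (h n x) (h n y) := key
        _ ≤ max 1 (η (D' / nndist x y)) * nndist (h n x) (h n y) := by
            refine mul_le_mul' ((η.monotone ?_).trans (le_max_right _ _)) le_rfl
            gcongr
            exact hD'le x z
        _ = nndist (h n x) (h n y) * max 1 (η (D' / nndist x y)) := mul_comm _ _
  have glower : ∀ x y : X, x ≠ y →
      a ≤ nndist (G x) (G y) * max 1 (η (D' / nndist x y)) := by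
    intro x y hxy
    have t1 : Filter.Tendsto
        (fun n => nndist (h (φ n) x) (h (φ n) y) * max 1 (η (D' / nndist x y)))
        Filter.atTop (nhds (nndist (G x) (G y) * max 1 (η (D' / nndist x y)))) :=
      ((ptw x).nndist (ptw y)).mul_const _
    exact ge_of_tendsto' t1 fun n => claimB (φ n) x y hxy
  have ginj : Function.Injective (⇑G) := by
    intro x y hxy
    by_contra hne2
    have hb := glower x y hne2
    rw [nndist_eq_zero.mpr hxy, zero_mul] at hb
    exact absurd (lt_of_lt_of_le hapos hb) (lt_irrefl _)
  have gqs : IsQS (⇑η) (⇑G) := by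
    intro x y z hxy hxz hyz
    have hden : (0:ℝ≥0) < nndist (G x) (G z) :=
      pos_iff_ne_zero.mpr fun e => hxz (ginj (nndist_eq_zero.mp e))
    rw [div_le_iff₀ hden]
    have t1 : Filter.Tendsto (fun n => nndist (h (φ n) x) (h (φ n) y))
        Filter.atTop (nhds (nndist (G x) (G y))) := (ptw x).nndist (ptw y)
    have t2 : Filter.Tendsto
        (fun n => η (nndist x y / nndist x z) * nndist (h (φ n) x) (h (φ n) z))
        Filter.atTop (nhds (η (nndist x y / nndist x z) * nndist (G x) (G z))) :=
      ((ptw x).nndist (ptw z)).const_mul _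
    refine le_of_tendsto_of_tendsto' t1 t2 fun n => ?_
    have key := hqs (φ n) x y z hxy hxz hyz
    have hd : (0:ℝ≥0) < nndist (h (φ n) x) (h (φ n) z) :=
      pos_iff_ne_zero.mpr fun e => hxz (hinj (φ n) (nndist_eq_zero.mp e))
    rwa [div_le_iff₀ hd] at key
  exact ⟨φ, hφ, ⇑G, ginj, ⟨η, gqs⟩, huni⟩
end
end

section
/- Among the 16 isometries of the doubled carpet D_p (the 8 isometries preserving the front and back copies of S_p together with their compositions with the face-swapping involution R), the only one whose fixed point set is a Jordan curve is R, and its fixed point set is the outer circle O; any other such isometry has fixed point set that is empty, finite, a Cantor set, or all of D_p. -/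
noncomputable section

/-- The outer peripheral circle `O = ∂[0,1]²`. -/
def Obd : Set (ℝ × ℝ) :=
  {z | (z.1 ∈ Set.Icc (0 : ℝ) 1 ∧ z.2 ∈ Set.Icc (0 : ℝ) 1) ∧
    (z.1 = 0 ∨ z.1 = 1 ∨ z.2 = 0 ∨ z.2 = 1)}

/-- The dihedral group of 8 isometries of the unit square `[0,1]²`. -/
def D4set : Set ((ℝ × ℝ) → (ℝ × ℝ)) :=
  { fun z => z,
    fun z => (1 - z.2, z.1),
    fun z => (1 - z.1, 1 - z.2),
    fun z => (z.2, 1 - z.1),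
    fun z => (z.2, z.1),
    fun z => (1 - z.1, z.2),
    fun z => (z.1, 1 - z.2),
    fun z => (1 - z.2, 1 - z.1) }

/-- The fixed point set in `D_p` of the isometry of the double `D_p` determined by a
square symmetry `g` and a Bool `s` recording composition with the face-swapping
involution `R`.  An isometry of the double is given by `g` on each face, composed with
`R` iff `s = true`; its fixed points project to the plane as follows: if `s = false`
the fixed points are the points of `S_p` (on either face) fixed by `g`, and if
`s = true` they are the points of the gluing curve `O` fixed by `g`. -/
def FixSet (p : ℕ) (g : (ℝ × ℝ) → (ℝ × ℝ)) (s : Bool) : Set (ℝ × ℝ) :=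
  if s then {z ∈ Sp p | z ∈ Obd ∧ g z = z} else {z ∈ Sp p | g z = z}

/-! The isometry `g` (or `g ∘ R`) fixes the points of `S_p` (of `O`) on the fixed locus of the
square symmetry `g`. For a rotation that locus is the removed centre; for a reflection it is an
axis, which meets `O` in two points and on which the carpet condition says that one base-`p`
expansion avoids the middle digit: `1/2` has only the expansion by middle digits, and two distinct
expansions of a number have extremal digits after their first difference. That digit set is
compact, perfect and nowhere dense in `ℝ`, hence a Cantor set. Finally `O` is a Jordan curve,
while `S_p ⊋ O` is not, since a circle admits no continuous injection into a circle minus a point,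
which is a line. -/

open Set Function Filter Topology Metric
open scoped ENNReal

/-! ### Cantor sets in `ℝ` -/

namespace CantorScheme

variable {β α : Type*}

theorem exists_branch {A : List β → Set α} {z : α} (hz : z ∈ A [])
    (hcover : ∀ l, A l ⊆ ⋃ b, A (b :: l)) : ∃ x : ℕ → β, ∀ n, z ∈ A (PiNat.res x n) := by
  obtain ⟨b₀, -⟩ := mem_iUnion.mp (hcover [] hz)
  have : Nonempty β := ⟨b₀⟩
  choose! next hnext using fun l (h : z ∈ A l) => mem_iUnion.mp (hcover l h)
  let L : ℕ → List β := fun n => Nat.rec [] (fun _ l => next l :: l) n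
  have hres : ∀ n, PiNat.res (fun n => next (L n)) n = L n := by
    intro n
    induction n with
    | zero => rfl
    | succ n ih => rw [PiNat.res_succ, ih]
  refine ⟨fun n => next (L n), fun n => ?_⟩
  rw [hres]
  induction n with
  | zero => exact hz
  | succ n ih => exact hnext _ ih

theorem nonempty_homeomorph_of_cover {X : Type*} [MetricSpace X] [CompleteSpace X]
    {A : List Bool → Set X} (hvan : VanishingDiam A) (hanti : ClosureAntitone A)
    (hdisj : CantorScheme.Disjoint A) (hne : ∀ l, (A l).Nonempty)
    (hcover : ∀ l, A l ⊆ ⋃ b, A (b :: l)) : Nonempty (A [] ≃ₜ (ℕ → Bool)) := by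
  have htotal := hanti.map_of_vanishingDiam hvan hne
  let f : (ℕ → Bool) → A [] := fun x =>
    ⟨(inducedMap A).2 ⟨x, htotal ▸ mem_univ x⟩, map_mem (A := A) ⟨x, htotal ▸ mem_univ x⟩ 0⟩
  have hcont : Continuous f :=
    (hvan.map_continuous.comp (continuous_id.subtype_mk _)).subtype_mk _
  have hinj : Injective f := fun x y hxy =>
    congrArg Subtype.val (hdisj.map_injective (congrArg Subtype.val hxy :))
  have hsurj : Surjective f := by
    rintro ⟨z, hz⟩
    obtain ⟨x, hx⟩ := exists_branch hz hcover
    refine ⟨x, Subtype.ext (eq_of_forall_dist_le fun ε hε => ?_)⟩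
    obtain ⟨n, hn⟩ := hvan.dist_lt ε hε x
    exact (hn _ (map_mem _ n) z (hx n)).le
  exact ⟨(hcont.homeoOfEquivCompactToT2 (f := Equiv.ofBijective f ⟨hinj, hsurj⟩)).symm⟩

end CantorScheme

theorem nonempty_homeomorph_cantorSpace_of_splitting {X : Type*} [MetricSpace X]
    [CompleteSpace X] {K : Set X} (P : Set X → Prop) (hK : P K) (hKdiam : Metric.ediam K ≠ ∞)
    {c : ℝ≥0∞} (hc : c < 1) (hP : ∀ S, P S → IsClosed S ∧ S.Nonempty)
    (hsplit : ∀ S, P S → ∃ S₀ S₁, P S₀ ∧ P S₁ ∧ Disjoint S₀ S₁ ∧ S₀ ∪ S₁ = S ∧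
      Metric.ediam S₀ ≤ c * Metric.ediam S ∧ Metric.ediam S₁ ≤ c * Metric.ediam S) :
    Nonempty (K ≃ₜ (ℕ → Bool)) := by
  choose! S₀ S₁ hP₀ hP₁ hdisj hunion hdiam₀ hdiam₁ using hsplit
  let A : List Bool → Set X := fun l => l.foldr (fun b S => cond b (S₁ S) (S₀ S)) K
  have hPA : ∀ l, P (A l) := by
    intro l
    induction l with
    | nil => exact hK
    | cons b l ih => cases b; exacts [hP₀ _ ih, hP₁ _ ih]
  have hsub : ∀ l b, A (b :: l) ⊆ A l := by
    intro l b
    rw [← hunion _ (hPA l)]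
    cases b; exacts [subset_union_left, subset_union_right]
  have hdiam : ∀ x : ℕ → Bool, ∀ n,
      Metric.ediam (A (PiNat.res x n)) ≤ c ^ n * Metric.ediam K := by
    intro x n
    induction n with
    | zero => simp [A]
    | succ n ih =>
      rw [PiNat.res_succ, pow_succ', mul_assoc]
      refine le_trans ?_ (mul_le_mul_right ih c)
      cases x n; exacts [hdiam₀ _ (hPA _), hdiam₁ _ (hPA _)]
  have hlim : Tendsto (fun n => c ^ n * Metric.ediam K) atTop (𝓝 0) := by
    simpa using ENNReal.Tendsto.mul_const (ENNReal.tendsto_pow_atTop_nhds_zero_of_lt_one hc)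
      (.inr hKdiam)
  refine CantorScheme.nonempty_homeomorph_of_cover
    (fun x => tendsto_of_tendsto_of_tendsto_of_le_of_le tendsto_const_nhds hlim
      (fun _ => zero_le) (hdiam x))
    (CantorScheme.Antitone.closureAntitone hsub fun l => (hP _ (hPA l)).1)
    (fun l a b hab => ?_) (fun l => (hP _ (hPA l)).2) fun l => ?_
  · cases a <;> cases b <;>
      first | exact absurd rfl hab | exact hdisj _ (hPA l) | exact (hdisj _ (hPA l)).symm
  · rw [← hunion _ (hPA l)]
    exact union_subset (subset_iUnion_of_subset false subset_rfl)
      (subset_iUnion_of_subset true subset_rfl)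

theorem Real.exists_split_of_preperfect {K : Set ℝ} (hK : IsClosed K) (hperf : Preperfect K)
    (hint : interior K = ∅) {a b : ℝ} (ha : a ∉ K) (hb : b ∉ K) (hne : (K ∩ Icc a b).Nonempty) :
    ∃ c ∉ K, a ≤ c ∧ c ≤ b ∧ (K ∩ Icc a c).Nonempty ∧ (K ∩ Icc c b).Nonempty ∧
      Metric.ediam (K ∩ Icc a c) ≤ ENNReal.ofReal (3 / 4) * Metric.ediam (K ∩ Icc a b) ∧
      Metric.ediam (K ∩ Icc c b) ≤ ENNReal.ofReal (3 / 4) * Metric.ediam (K ∩ Icc a b) := by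
  have hS : IsCompact (K ∩ Icc a b) := isCompact_Icc.inter_left hK
  obtain ⟨α, ⟨hαK, haα, hαb⟩, hαleast⟩ := hS.exists_isLeast hne
  obtain ⟨β, ⟨hβK, haβ, hβb⟩, hβgreatest⟩ := hS.exists_isGreatest hne
  have hαβ : α < β := by
    have hα_mem : Ioo a b ∈ 𝓝 α :=
      Ioo_mem_nhds (haα.lt_of_ne (ne_of_mem_of_not_mem hαK ha).symm)
        (hαb.lt_of_ne (ne_of_mem_of_not_mem hαK hb))
    obtain ⟨y, ⟨⟨hay, hyb⟩, hyK⟩, hyα⟩ := accPt_iff_nhds.mp (hperf α hαK) _ hα_mem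
    have hy : y ∈ K ∩ Icc a b := ⟨hyK, hay.le, hyb.le⟩
    exact ((hαleast hy).lt_of_ne hyα.symm).trans_le (hβgreatest hy)
  obtain ⟨c, hcK, hc₁, hc₂⟩ := (interior_eq_empty_iff_dense_compl.mp hint).exists_between
    (show α + (β - α) / 4 < β - (β - α) / 4 by linarith)
  have hdiam : ∀ {x y : ℝ}, y - x ≤ 3 / 4 * (β - α) →
      ENNReal.ofReal (y - x) ≤ ENNReal.ofReal (3 / 4) * Metric.ediam (K ∩ Icc a b) := by
    intro x y h
    calc ENNReal.ofReal (y - x) ≤ ENNReal.ofReal (3 / 4) * ENNReal.ofReal (β - α) := by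
          rw [← ENNReal.ofReal_mul (by norm_num)]; exact ENNReal.ofReal_le_ofReal h
      _ = ENNReal.ofReal (3 / 4) * edist β α := by
          rw [edist_dist, Real.dist_eq, abs_of_pos (by linarith)]
      _ ≤ _ := by gcongr; exact Metric.edist_le_ediam_of_mem ⟨hβK, haβ, hβb⟩ ⟨hαK, haα, hαb⟩
  refine ⟨c, hcK, by linarith, by linarith, ⟨α, hαK, haα, by linarith⟩, ⟨β, hβK, by linarith, hβb⟩,
    ?_, ?_⟩
  · refine (Metric.ediam_mono fun x (hx : x ∈ K ∩ Icc a c) => ?_).trans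
      ((Real.ediam_Icc α c).trans_le (hdiam (by linarith)))
    exact ⟨hαleast ⟨hx.1, hx.2.1, by linarith [hx.2.2]⟩, hx.2.2⟩
  · refine (Metric.ediam_mono fun x (hx : x ∈ K ∩ Icc c b) => ?_).trans
      ((Real.ediam_Icc c β).trans_le (hdiam (by linarith)))
    exact ⟨hx.2.1, hβgreatest ⟨hx.1, by linarith [hx.2.1], hx.2.2⟩⟩

theorem Real.nonempty_homeomorph_cantorSpace {K : Set ℝ} (hK : IsCompact K) (hne : K.Nonempty)
    (hperf : Preperfect K) (hint : interior K = ∅) : Nonempty (K ≃ₜ (ℕ → Bool)) := by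
  obtain ⟨a, ha⟩ := hK.bddBelow
  obtain ⟨b, hb⟩ := hK.bddAbove
  refine nonempty_homeomorph_cantorSpace_of_splitting (c := ENNReal.ofReal (3 / 4))
    (fun S => ∃ a b, a ∉ K ∧ b ∉ K ∧ (K ∩ Icc a b).Nonempty ∧ S = K ∩ Icc a b)
    ⟨a - 1, b + 1, fun h => by linarith [ha h], fun h => by linarith [hb h], ?_, ?_⟩
    hK.isBounded.ediam_ne_top (ENNReal.ofReal_lt_one.mpr (by norm_num)) ?_ ?_
  · obtain ⟨x, hx⟩ := hne
    exact ⟨x, hx, by linarith [ha hx], by linarith [hb hx]⟩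
  · refine (inter_eq_left.mpr fun x hx => ?_).symm
    exact ⟨by linarith [ha hx], by linarith [hb hx]⟩
  · rintro S ⟨a, b, -, -, hne, rfl⟩
    exact ⟨hK.isClosed.inter isClosed_Icc, hne⟩
  · rintro S ⟨a, b, ha, hb, hne, rfl⟩
    obtain ⟨c, hcK, hac, hcb, hne₀, hne₁, hdiam₀, hdiam₁⟩ :=
      Real.exists_split_of_preperfect hK.isClosed hperf hint ha hb hne
    refine ⟨K ∩ Icc a c, K ∩ Icc c b, ⟨a, c, ha, hcK, hne₀, rfl⟩, ⟨c, b, hcK, hb, hne₁, rfl⟩,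
      disjoint_left.mpr fun x hx hx' => hcK ?_, ?_, hdiam₀, hdiam₁⟩
    · rw [← le_antisymm hx.2.2 hx'.2.1]
      exact hx.1
    · rw [← inter_union_distrib_left, Icc_union_Icc_eq_Icc hac hcb]

/-! ### Base-`p` expansions -/

namespace Real

variable {p : ℕ}

theorem ofDigits_eq_tsum (a : ℕ → Fin p) :
    ofDigits a = ∑' k, ((a k : ℕ) : ℝ) / (p : ℝ) ^ (k + 1) := by
  simp [ofDigits, ofDigitsTerm, div_eq_mul_inv]

theorem ofDigits_eq_head_add_tail (a : ℕ → Fin p) :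
    ofDigits a = ((a 0 : ℕ) + ofDigits (fun k => a (k + 1))) / p := by
  have hp : (p : ℝ) ≠ 0 := by have := (a 0).pos; positivity
  rw [ofDigits_eq_sum_add_ofDigits a 1]
  simp [ofDigitsTerm]
  field_simp

theorem ofDigits_add_ofDigits_rev (hp : 1 < p) (a : ℕ → Fin p) :
    ofDigits a + ofDigits (fun k => (a k).rev) = 1 := by
  rw [← ofDigits_const_last_eq_one' hp, ofDigits, ofDigits, ofDigits,
    ← summable_ofDigitsTerm.tsum_add summable_ofDigitsTerm]
  refine tsum_congr fun k => ?_
  have := (a k).isLt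
  simp only [ofDigitsTerm, Fin.val_rev, ← add_mul]
  congr 1
  rw [← Nat.cast_add]
  congr 1
  omega

theorem ofDigits_rev (hp : 1 < p) (a : ℕ → Fin p) :
    ofDigits (fun k => (a k).rev) = 1 - ofDigits a := by
  linarith [ofDigits_add_ofDigits_rev hp a]

theorem ofDigits_eq_zero_iff (a : ℕ → Fin p) : ofDigits a = 0 ↔ ∀ k, (a k : ℕ) = 0 := by
  have hp : (0 : ℝ) < p := by have := (a 0).pos; positivity
  rw [ofDigits, ← summable_ofDigitsTerm.hasSum_iff,
    hasSum_zero_iff_of_nonneg fun _ => ofDigitsTerm_nonneg, funext_iff]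
  simp [ofDigitsTerm, hp.ne']

theorem ofDigits_eq_one_iff (hp : 1 < p) (a : ℕ → Fin p) :
    ofDigits a = 1 ↔ ∀ k, (a k : ℕ) = p - 1 := by
  rw [eq_comm, ← sub_eq_zero, ← ofDigits_rev hp, ofDigits_eq_zero_iff]
  refine forall_congr' fun k => ?_
  have := (a k).isLt
  rw [Fin.val_rev]
  omega

theorem ofDigits_tail_of_lt (hp : 1 < p) {a b : ℕ → Fin p} (h : ofDigits a = ofDigits b)
    (hlt : a 0 < b 0) : ∀ k, (a (k + 1) : ℕ) = p - 1 ∧ (b (k + 1) : ℕ) = 0 := by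
  rw [ofDigits_eq_head_add_tail a, ofDigits_eq_head_add_tail b,
    div_left_inj' (by positivity)] at h
  have hlt' : ((a 0 : ℕ) : ℝ) + 1 ≤ (b 0 : ℕ) := by exact_mod_cast hlt
  have ha := ofDigits_le_one fun k => a (k + 1)
  have hb := ofDigits_nonneg fun k => b (k + 1)
  have ha' : ofDigits (fun k => a (k + 1)) = 1 := by linarith
  have hb' : ofDigits (fun k => b (k + 1)) = 0 := by linarith
  exact fun k => ⟨(ofDigits_eq_one_iff hp _).mp ha' k, (ofDigits_eq_zero_iff _).mp hb' k⟩

theorem ofDigits_shift_eq {a b : ℕ → Fin p} (h : ofDigits a = ofDigits b) {n : ℕ}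
    (hn : ∀ k < n, a k = b k) : ofDigits (fun k => a (k + n)) = ofDigits (fun k => b (k + n)) := by
  have hp : (p : ℝ) ≠ 0 := by have := (a 0).pos; positivity
  have hsum : ∑ k ∈ Finset.range n, ofDigitsTerm a k = ∑ k ∈ Finset.range n, ofDigitsTerm b k :=
    Finset.sum_congr rfl fun k hk => by simp only [ofDigitsTerm, hn k (Finset.mem_range.mp hk)]
  rw [ofDigits_eq_sum_add_ofDigits a n, ofDigits_eq_sum_add_ofDigits b n, hsum,
    add_right_inj] at h
  exact mul_left_cancel₀ (by positivity) h

theorem exists_extremal_tail_of_ofDigits_eq (hp : 1 < p) {a b : ℕ → Fin p}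
    (h : ofDigits a = ofDigits b) (hab : a ≠ b) :
    ∃ n, (∀ k < n, a k = b k) ∧ a n ≠ b n ∧ ∀ k, n < k →
      ((a k : ℕ) = p - 1 ∧ (b k : ℕ) = 0) ∨ ((a k : ℕ) = 0 ∧ (b k : ℕ) = p - 1) := by
  have hex : ∃ n, a n ≠ b n := by simpa [funext_iff] using hab
  classical
  refine ⟨Nat.find hex, fun k hk => not_not.mp (Nat.find_min hex hk), Nat.find_spec hex,
    fun k hk => ?_⟩
  have hshift := ofDigits_shift_eq h fun k hk => not_not.mp (Nat.find_min hex hk)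
  obtain ⟨j, rfl⟩ : ∃ j, k = j + 1 + Nat.find hex := ⟨k - Nat.find hex - 1, by omega⟩
  rcases (Nat.find_spec hex).lt_or_gt with hlt | hlt
  · have := ofDigits_tail_of_lt hp hshift (by simpa using hlt) j
    exact Or.inl this
  · have := ofDigits_tail_of_lt hp hshift.symm (by simpa using hlt) j
    exact Or.inr this.symm

theorem exists_nat_eq_pow_mul_sum_ofDigitsTerm (a : ℕ → Fin p) (n : ℕ) :
    ∃ M : ℕ, (p : ℝ) ^ n * ∑ k ∈ Finset.range n, ofDigitsTerm a k = M := by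
  have hp : (p : ℝ) ≠ 0 := by have := (a 0).pos; positivity
  induction n with
  | zero => exact ⟨0, by simp⟩
  | succ n ih =>
    obtain ⟨M, hM⟩ := ih
    refine ⟨p * M + a n, ?_⟩
    rw [Finset.sum_range_succ, mul_add, pow_succ, mul_right_comm, hM, ofDigitsTerm]
    push_cast
    field_simp
    ring

theorem _root_.Fin.val_rev_eq_mid_iff (hodd : Odd p) (d : Fin p) :
    (d.rev : ℕ) = (p - 1) / 2 ↔ (d : ℕ) = (p - 1) / 2 := by
  obtain ⟨r, rfl⟩ := hodd
  have := d.isLt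
  rw [Fin.val_rev]
  omega

theorem ofDigits_const_mid (hp : 3 ≤ p) (hodd : Odd p) :
    ofDigits (fun _ => (⟨(p - 1) / 2, by omega⟩ : Fin p)) = 1 / 2 := by
  have h := ofDigits_add_ofDigits_rev (by omega) fun _ => (⟨(p - 1) / 2, by omega⟩ : Fin p)
  have hrev : (⟨(p - 1) / 2, by omega⟩ : Fin p).rev = ⟨(p - 1) / 2, by omega⟩ :=
    Fin.ext ((Fin.val_rev_eq_mid_iff hodd _).mpr rfl)
  simp only [hrev] at h
  linarith

theorem ofDigits_eq_half_iff (hp : 3 ≤ p) (hodd : Odd p) {a : ℕ → Fin p} :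
    ofDigits a = 1 / 2 ↔ ∀ k, (a k : ℕ) = (p - 1) / 2 := by
  constructor
  · intro h
    by_contra hne
    obtain ⟨n, -, -, htail⟩ := exists_extremal_tail_of_ofDigits_eq (by omega)
      (h.trans (ofDigits_const_mid hp hodd).symm)
      (fun hc => hne fun k => by rw [hc])
    have := htail (n + 1) (by omega)
    simp only at this
    omega
  · intro h
    rw [← ofDigits_const_mid hp hodd]
    exact congrArg ofDigits (funext fun k => Fin.ext (h k))

end Real

/-! ### Jordan curves -/

theorem not_injective_of_isPreconnected_compl_singleton {X : Type*} [TopologicalSpace X]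
    [PreconnectedSpace X] [Nontrivial X] (hX : ∀ x : X, IsPreconnected ({x}ᶜ : Set X))
    {f : X → ℝ} (hf : Continuous f) : ¬ Injective f := by
  intro hinj
  obtain ⟨u, v, huv⟩ := exists_pair_ne X
  wlog h : f u < f v generalizing u v
  · exact this v u huv.symm ((hinj.ne huv).symm.lt_of_le (not_lt.mp h))
  have hmid : (f u + f v) / 2 ∈ Icc (f u) (f v) := ⟨by linarith, by linarith⟩
  obtain ⟨x, -, hx⟩ := isPreconnected_univ.intermediate_value (mem_univ u) (mem_univ v)
    hf.continuousOn hmid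
  have hu : u ∈ ({x}ᶜ : Set X) := by rintro rfl; linarith
  have hv : v ∈ ({x}ᶜ : Set X) := by rintro rfl; linarith
  obtain ⟨y, hy, hyx⟩ := (hX x).intermediate_value hu hv hf.continuousOn hmid
  exact hy (hinj (hyx.trans hx.symm))

theorem isPreconnected_sphere_compl_singleton {E : Type*} [NormedAddCommGroup E]
    [InnerProductSpace ℝ E] (v : sphere (0 : E) 1) :
    IsPreconnected ({v}ᶜ : Set (sphere (0 : E) 1)) := by
  let e := stereographic (norm_eq_of_mem_sphere v)
  rw [← stereographic_source (norm_eq_of_mem_sphere v), ← e.symm_image_target_eq_source]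
  exact isPreconnected_univ.image _ e.continuousOn_symm

local notation "𝕊¹" => sphere (0 : EuclideanSpace ℝ (Fin 2)) 1

instance : PreconnectedSpace 𝕊¹ :=
  Subtype.preconnectedSpace (isPreconnected_sphere (by rw [← Module.finrank_eq_rank]; simp) 0 1)

instance : Nontrivial 𝕊¹ := by
  obtain ⟨v, hv⟩ :=
    (NormedSpace.sphere_nonempty (x := (0 : EuclideanSpace ℝ (Fin 2)))).mpr zero_le_one
  exact ⟨⟨⟨v, hv⟩, -⟨v, hv⟩, ne_neg_of_mem_unit_sphere ℝ _⟩⟩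

theorem exists_injOn_sphere_compl_singleton (q : 𝕊¹) :
    ∃ g : 𝕊¹ → ℝ, ContinuousOn g {q}ᶜ ∧ InjOn g {q}ᶜ := by
  have : Fact (Module.finrank ℝ (EuclideanSpace ℝ (Fin 2)) = 1 + 1) := ⟨by simp⟩
  let e := stereographic' 1 q
  refine ⟨fun s => e s 0, ?_, fun s hs t ht hst => ?_⟩
  · exact (EuclideanSpace.proj (0 : Fin 1)).continuous.comp_continuousOn
      (e.continuousOn.mono (stereographic'_source q).ge)
  · apply e.injOn ((stereographic'_source q).ge hs) ((stereographic'_source q).ge ht)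
    ext i
    fin_cases i
    exact hst

theorem surjective_of_continuous_injective_circle {h : 𝕊¹ → 𝕊¹} (hc : Continuous h)
    (hi : Injective h) : Surjective h := by
  by_contra hs
  obtain ⟨q, hq⟩ := not_forall.mp hs
  obtain ⟨g, hgc, hgi⟩ := exists_injOn_sphere_compl_singleton q
  have hmaps : ∀ s, h s ∈ ({q}ᶜ : Set 𝕊¹) := fun s hsq => hq ⟨s, hsq⟩
  exact not_injective_of_isPreconnected_compl_singleton isPreconnected_sphere_compl_singleton
    (hgc.comp_continuous hc hmaps) fun s t hst => hi (hgi (hmaps s) (hmaps t) hst)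

namespace IsJordanCurve

variable {X : Type*} [TopologicalSpace X] {J J' : Set X}

theorem isPreconnected (hJ : IsJordanCurve J) : IsPreconnected J := by
  obtain ⟨φ, hc, -, rfl⟩ := hJ
  exact isPreconnected_range hc

theorem nontrivial (hJ : IsJordanCurve J) : J.Nontrivial := by
  obtain ⟨φ, -, hi, rfl⟩ := hJ
  obtain ⟨u, v, huv⟩ := exists_pair_ne 𝕊¹
  exact ⟨φ u, mem_range_self u, φ v, mem_range_self v, hi.ne huv⟩

theorem not_isTotallyDisconnected (hJ : IsJordanCurve J) : ¬ IsTotallyDisconnected J :=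
  fun h => (h J subset_rfl hJ.isPreconnected).not_nontrivial hJ.nontrivial

theorem eq_of_subset [T2Space X] (hJ : IsJordanCurve J) (hJ' : IsJordanCurve J') (h : J' ⊆ J) :
    J' = J := by
  obtain ⟨φ, hφc, hφi, rfl⟩ := hJ
  obtain ⟨ψ, hψc, hψi, rfl⟩ := hJ'
  let e := (hφc.isClosedEmbedding hφi).isEmbedding.toHomeomorph
  let k : 𝕊¹ → 𝕊¹ := fun s => e.symm ⟨ψ s, h (mem_range_self s)⟩
  have hk : Surjective k := surjective_of_continuous_injective_circle
    (e.symm.continuous.comp (hψc.subtype_mk _)) fun s t hst => hψi (by simpa [k] using hst)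
  refine h.antisymm fun x ⟨s, hs⟩ => ?_
  obtain ⟨t, ht⟩ := hk s
  exact ⟨t, (congrArg Subtype.val (e.symm_apply_eq.mp ht)).trans hs⟩

end IsJordanCurve

theorem isJordanCurve_sphere {F : Type*} [NormedAddCommGroup F] [NormedSpace ℝ F]
    (L : EuclideanSpace ℝ (Fin 2) ≃L[ℝ] F) (c : F) {r : ℝ} (hr : 0 < r) :
    IsJordanCurve (sphere c r) := by
  have hL : ∀ v : sphere (0 : EuclideanSpace ℝ (Fin 2)) 1, 0 < ‖L v‖ := fun v =>
    norm_pos_iff.mpr (L.map_ne_zero_iff.mpr (ne_zero_of_mem_unit_sphere v))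
  refine ⟨fun v => c + (r / ‖L v‖) • L v, ?_, fun v w hvw => ?_, ?_⟩
  · have : Continuous fun v : sphere (0 : EuclideanSpace ℝ (Fin 2)) 1 => L v :=
      L.continuous.comp continuous_subtype_val
    exact continuous_const.add
      ((continuous_const.div this.norm fun v => (hL v).ne').smul this)
  · have h₁ : (r / ‖L v‖) • (v : EuclideanSpace ℝ (Fin 2)) =
        (r / ‖L w‖) • (w : EuclideanSpace ℝ (Fin 2)) := by
      apply L.injective
      simpa only [map_smul] using add_left_cancel hvw
    have h₂ : r / ‖L v‖ = r / ‖L w‖ := by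
      have := congrArg norm h₁
      rwa [norm_smul, norm_smul, norm_eq_of_mem_sphere, norm_eq_of_mem_sphere, mul_one, mul_one,
        Real.norm_of_nonneg (by have := hL v; positivity),
        Real.norm_of_nonneg (by have := hL w; positivity)] at this
    rw [h₂] at h₁
    exact Subtype.ext (smul_right_injective _ (by have := hL w; positivity) h₁)
  · ext z
    constructor
    · rintro ⟨v, rfl⟩
      rw [mem_sphere, dist_eq_norm, add_sub_cancel_left, norm_smul,
        Real.norm_of_nonneg (by have := hL v; positivity), div_mul_cancel₀ _ (hL v).ne']
    · intro hz
      have hzc : z - c ≠ 0 := by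
        rw [sub_ne_zero]; rintro rfl; simp at hz; linarith
      set u := L.symm (z - c)
      have hu : 0 < ‖u‖ := norm_pos_iff.mpr ((L.symm.map_ne_zero_iff).mpr hzc)
      refine ⟨⟨‖u‖⁻¹ • u, by simp [norm_smul, hu.ne']⟩, ?_⟩
      have hLv : L (‖u‖⁻¹ • u) = ‖u‖⁻¹ • (z - c) := by simp [u]
      rw [mem_sphere, dist_eq_norm] at hz
      simp only [hLv, norm_smul, hz, Real.norm_of_nonneg (inv_nonneg.mpr hu.le), smul_smul]
      rw [show r / (‖u‖⁻¹ * r) * ‖u‖⁻¹ = 1 by field_simp, one_smul, add_sub_cancel]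

theorem obd_eq_sphere : Obd = sphere ((1 / 2, 1 / 2) : ℝ × ℝ) (1 / 2) := by
  ext ⟨x, y⟩
  simp only [Obd, mem_sphere, Prod.dist_eq, Real.dist_eq, mem_Icc, mem_ofPred_eq]
  constructor
  · rintro ⟨⟨⟨hx₀, hx₁⟩, hy₀, hy₁⟩, h | h | h | h⟩ <;> subst h <;> norm_num <;>
      (rw [abs_le]; constructor <;> linarith)
  · intro h
    have hx := (le_max_left _ _).trans h.le
    have hy := (le_max_right _ _).trans h.le
    rw [abs_le] at hx hy
    refine ⟨⟨⟨by linarith, by linarith⟩, by linarith, by linarith⟩, ?_⟩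
    rcases max_choice |x - 1 / 2| |y - 1 / 2| with hm | hm <;>
      rw [hm, abs_eq (by norm_num)] at h <;> rcases h with h | h
    · exact Or.inr (Or.inl (by linarith))
    · exact Or.inl (by linarith)
    · exact Or.inr (Or.inr (Or.inr (by linarith)))
    · exact Or.inr (Or.inr (Or.inl (by linarith)))

theorem isJordanCurve_obd : IsJordanCurve Obd := by
  rw [obd_eq_sphere]
  exact isJordanCurve_sphere (ContinuousLinearEquiv.ofFinrankEq (by simp)) _ (by norm_num)

/-! ### The carpet and the fixed point sets -/

open Real

theorem SpPair.symm {p : ℕ} {x y : ℝ} : SpPair p x y → SpPair p y x :=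
  fun ⟨a, b, hd, hx, hy⟩ =>
    ⟨b, a, fun k => ⟨(hd k).2.1, (hd k).1, fun h => (hd k).2.2 h.symm⟩, hy, hx⟩

namespace Carpet

variable {p : ℕ}

theorem spPair_iff {x y : ℝ} : SpPair p x y ↔ ∃ a b : ℕ → Fin p,
    (∀ k, ¬((a k : ℕ) = (p - 1) / 2 ∧ (b k : ℕ) = (p - 1) / 2)) ∧
      ofDigits a = x ∧ ofDigits b = y := by
  constructor
  · rintro ⟨a, b, hd, rfl, rfl⟩
    exact ⟨fun k => ⟨a k, (hd k).1⟩, fun k => ⟨b k, (hd k).2.1⟩, fun k => (hd k).2.2,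
      ofDigits_eq_tsum _, ofDigits_eq_tsum _⟩
  · rintro ⟨a, b, hd, rfl, rfl⟩
    exact ⟨fun k => a k, fun k => b k, fun k => ⟨(a k).isLt, (b k).isLt, hd k⟩,
      ofDigits_eq_tsum a, ofDigits_eq_tsum b⟩

theorem spPair_comm {x y : ℝ} : SpPair p x y ↔ SpPair p y x :=
  ⟨SpPair.symm, SpPair.symm⟩

def midCantor (p : ℕ) : Set ℝ :=
  {x | ∃ c : ℕ → Fin p, (∀ k, (c k : ℕ) ≠ (p - 1) / 2) ∧ ofDigits c = x}

theorem ofDigits_mem_midCantor (hp : 3 ≤ p) {a b : ℕ → Fin p}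
    (hab : ∀ k, ¬((a k : ℕ) = (p - 1) / 2 ∧ (b k : ℕ) = (p - 1) / 2))
    (h : ofDigits a = ofDigits b) : ofDigits a ∈ midCantor p := by
  by_cases heq : a = b
  · subst heq
    exact ⟨a, fun k hk => hab k ⟨hk, hk⟩, rfl⟩
  obtain ⟨n, hpre, -, htail⟩ := exists_extremal_tail_of_ofDigits_eq (by omega) h heq
  have hext : ∀ k, n < k → (a k : ℕ) ≠ (p - 1) / 2 ∧ (b k : ℕ) ≠ (p - 1) / 2 := by
    intro k hk
    rcases htail k hk with h | h <;> omega
  -- past the first difference both expansions are extremal, so whichever one has no middle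
  -- digit at that position avoids it everywhere
  by_cases han : (a n : ℕ) = (p - 1) / 2
  · refine ⟨b, fun k => ?_, h.symm⟩
    rcases lt_trichotomy k n with hk | rfl | hk
    · rw [← hpre k hk]; exact fun hk' => hab k ⟨hk', by rw [← hpre k hk]; exact hk'⟩
    · exact fun hk' => hab k ⟨han, hk'⟩
    · exact (hext k hk).2
  · refine ⟨a, fun k => ?_, rfl⟩
    rcases lt_trichotomy k n with hk | rfl | hk
    · exact fun hk' => hab k ⟨hk', by rw [← hpre k hk]; exact hk'⟩
    · exact han
    · exact (hext k hk).1

theorem spPair_self_iff (hp : 3 ≤ p) {x : ℝ} : SpPair p x x ↔ x ∈ midCantor p := by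
  rw [spPair_iff]
  constructor
  · rintro ⟨a, b, hab, rfl, h⟩
    exact ofDigits_mem_midCantor hp hab h.symm
  · rintro ⟨c, hc, rfl⟩
    exact ⟨c, c, fun k h => hc k h.1, rfl, rfl⟩

theorem spPair_one_sub_iff (hp : 3 ≤ p) (hodd : Odd p) {x : ℝ} :
    SpPair p x (1 - x) ↔ x ∈ midCantor p := by
  rw [spPair_iff]
  constructor
  · rintro ⟨a, b, hab, rfl, h⟩
    refine ofDigits_mem_midCantor hp (b := fun k => (b k).rev) (fun k => ?_) ?_
    · rw [Fin.val_rev_eq_mid_iff hodd]; exact hab k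
    · rw [ofDigits_rev (by omega), h, sub_sub_cancel]
  · rintro ⟨c, hc, rfl⟩
    refine ⟨c, fun k => (c k).rev, fun k h => hc k h.1, rfl, ofDigits_rev (by omega) c⟩

theorem spPair_half_iff (hp : 3 ≤ p) (hodd : Odd p) {y : ℝ} :
    SpPair p (1 / 2) y ↔ y ∈ midCantor p := by
  rw [spPair_iff]
  constructor
  · rintro ⟨a, b, hab, ha, rfl⟩
    exact ⟨b, fun k hk => hab k ⟨(ofDigits_eq_half_iff hp hodd).mp ha k, hk⟩, rfl⟩
  · rintro ⟨c, hc, rfl⟩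
    exact ⟨_, c, fun k h => hc k h.2, ofDigits_const_mid hp hodd, rfl⟩

theorem isCompact_midCantor : IsCompact (midCantor p) := by
  have hclosed : IsClosed {c : ℕ → Fin p | ∀ k, (c k : ℕ) ≠ (p - 1) / 2} := by
    simp only [ofPred_forall]
    exact isClosed_iInter fun k =>
      (isClosed_discrete {d : Fin p | (d : ℕ) ≠ (p - 1) / 2}).preimage
        (continuous_apply (A := fun _ => Fin p) k)
  convert hclosed.isCompact.image continuous_ofDigits using 1
  ext x
  simp [midCantor]

theorem zero_mem_midCantor (hp : 3 ≤ p) : (0 : ℝ) ∈ midCantor p :=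
  ⟨fun _ => ⟨0, by omega⟩, fun _ => by simp; omega, (ofDigits_eq_zero_iff _).mpr fun _ => rfl⟩

theorem preperfect_midCantor (hp : 3 ≤ p) : Preperfect (midCantor p) := by
  rintro _ ⟨c, hc, rfl⟩
  rw [accPt_iff_nhds]
  intro U hU
  obtain ⟨ε, hε, hball⟩ := Metric.mem_nhds_iff.mp hU
  obtain ⟨n, hn⟩ := exists_pow_lt_of_lt_one hε
    (inv_lt_one_of_one_lt₀ (by exact_mod_cast (by omega : 1 < p) : (1 : ℝ) < p))
  let d : Fin p := if (c n : ℕ) = 0 then ⟨p - 1, by omega⟩ else ⟨0, by omega⟩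
  have hd : (d : ℕ) ≠ c n ∧ (d : ℕ) ≠ (p - 1) / 2 := by
    simp only [d]; split_ifs <;> simp <;> omega
  let c' := Function.update c n d
  have hc' : ∀ k, k ≠ n → c' k = c k := fun k hk => Function.update_of_ne hk _ _
  refine ⟨ofDigits c', ⟨hball ?_, c', fun k => ?_, rfl⟩, fun heq => ?_⟩
  · rw [Metric.mem_ball, Real.dist_eq, inv_pow] at *
    exact (abs_ofDigits_sub_ofDigits_le fun k hk => hc' k hk.ne).trans_lt hn
  · rcases eq_or_ne k n with rfl | hk
    · simpa [c'] using hd.2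
    · rw [hc' k hk]; exact hc k
  · -- distinct expansions of one number differ at every digit after the first difference,
    -- whereas `c'` and `c` agree beyond `n`
    have hne : c' ≠ c := fun h => hd.1 (by rw [← congrFun h n]; simp [c'])
    obtain ⟨m, -, -, htail⟩ := exists_extremal_tail_of_ofDigits_eq (by omega) heq hne
    have := htail (max m n + 1) (by omega)
    rw [hc' _ (by omega)] at this
    omega

theorem notMem_midCantor_of_pow_mul_eq (hp : 3 ≤ p) (hodd : Odd p) {x : ℝ} (n : ℕ) (N : ℤ)
    (hx : (p : ℝ) ^ n * x = N + 1 / 2) : x ∉ midCantor p := by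
  -- the digits after position `n` would expand `1 / 2`, so they would all be middle digits
  rintro ⟨c, hc, rfl⟩
  obtain ⟨M, hM⟩ := exists_nat_eq_pow_mul_sum_ofDigitsTerm c n
  have hT₀ := ofDigits_nonneg fun k => c (k + n)
  have hT₁ := ofDigits_le_one fun k => c (k + n)
  have hsplit : (p : ℝ) ^ n * ofDigits c = M + ofDigits (fun k => c (k + n)) := by
    rw [ofDigits_eq_sum_add_ofDigits c n, mul_add, hM, ← mul_assoc,
      mul_inv_cancel₀ (by positivity), one_mul]
  have hNM : N = M := by
    have h₁ : ((N - M : ℤ) : ℝ) < 1 := by push_cast; linarith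
    have h₂ : (-1 : ℝ) < ((N - M : ℤ) : ℝ) := by push_cast; linarith
    have : N - M < 1 ∧ -1 < N - M := ⟨by exact_mod_cast h₁, by exact_mod_cast h₂⟩
    omega
  have hhalf : ofDigits (fun k => c (k + n)) = 1 / 2 := by
    rw [hNM] at hx
    push_cast at hx
    linarith
  exact hc n (by simpa using (ofDigits_eq_half_iff hp hodd).mp hhalf 0)

theorem interior_midCantor (hp : 3 ≤ p) (hodd : Odd p) : interior (midCantor p) = ∅ := by
  rw [interior_eq_empty_iff_dense_compl]
  refine dense_of_exists_between fun a b hab => ?_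
  obtain ⟨n, hn⟩ := pow_unbounded_of_one_lt (2 / (b - a))
    (by exact_mod_cast (by omega : 1 < p) : (1 : ℝ) < p)
  have hpn : (0 : ℝ) < (p : ℝ) ^ n := by positivity
  have hgap : 2 < (b - a) * (p : ℝ) ^ n := by
    rwa [div_lt_iff₀ (by linarith), mul_comm] at hn
  set N : ℤ := ⌊a * (p : ℝ) ^ n⌋ + 1
  have hN₁ := Int.lt_floor_add_one (a * (p : ℝ) ^ n)
  have hN₂ := Int.floor_le (a * (p : ℝ) ^ n)
  refine ⟨(N + 1 / 2) / (p : ℝ) ^ n,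
    notMem_midCantor_of_pow_mul_eq hp hodd n N (by field_simp), ?_, ?_⟩
  · rw [lt_div_iff₀ hpn]
    push_cast [N]
    linarith
  · rw [div_lt_iff₀ hpn]
    push_cast [N]
    linarith

theorem spPair_of_mem_Icc (hp : 3 ≤ p) {x y : ℝ} (hx : x = 0 ∨ x = 1) (hy : y ∈ Icc (0 : ℝ) 1) :
    SpPair p x y := by
  obtain ⟨b, -, rfl⟩ := ofDigits_SurjOn (by omega : 1 < p) hy
  rw [spPair_iff]
  rcases hx with rfl | rfl
  · refine ⟨fun _ => ⟨0, by omega⟩, b, fun k h => ?_,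
      (ofDigits_eq_zero_iff _).mpr fun _ => rfl, rfl⟩
    simp only at h
    omega
  · refine ⟨fun _ => ⟨p - 1, by omega⟩, b, fun k h => ?_,
      (ofDigits_eq_one_iff (by omega) _).mpr fun _ => rfl, rfl⟩
    simp only at h
    omega

theorem obd_subset_sp (hp : 3 ≤ p) : Obd ⊆ Sp p := by
  rintro ⟨x, y⟩ ⟨⟨hx, hy⟩, h | h | h | h⟩
  · exact spPair_of_mem_Icc hp (.inl h) hy
  · exact spPair_of_mem_Icc hp (.inr h) hy
  · exact spPair_comm.mp (spPair_of_mem_Icc hp (.inl h) hx)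
  · exact spPair_comm.mp (spPair_of_mem_Icc hp (.inr h) hx)

theorem inv_mem_midCantor (hp : 3 ≤ p) : (p : ℝ)⁻¹ ∈ midCantor p := by
  refine ⟨fun k => if k = 0 then ⟨0, by omega⟩ else ⟨p - 1, by omega⟩, fun k => ?_, ?_⟩
  · dsimp only
    split_ifs <;> simp <;> omega
  · rw [ofDigits_eq_head_add_tail, (ofDigits_eq_one_iff (by omega) _).mpr fun _ => rfl]
    simp

theorem sp_not_subset_obd (hp : 3 ≤ p) : ¬ Sp p ⊆ Obd := by
  have hp' : (1 : ℝ) < p := by exact_mod_cast (by omega : 1 < p)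
  have h₀ : (0 : ℝ) < (p : ℝ)⁻¹ := by positivity
  have h₁ : (p : ℝ)⁻¹ < 1 := inv_lt_one_of_one_lt₀ hp'
  intro h
  obtain ⟨-, hO | hO | hO | hO⟩ :=
    h ((spPair_self_iff hp).mpr (inv_mem_midCantor hp) : ((p : ℝ)⁻¹, (p : ℝ)⁻¹) ∈ Sp p) <;>
  simp only at hO <;> linarith

theorem fixSet_subset (g : ℝ × ℝ → ℝ × ℝ) (s : Bool) : FixSet p g s ⊆ {z | g z = z} := by
  cases s
  · exact fun z hz => hz.2
  · exact fun z hz => hz.2.2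

theorem fixSet_id_true (hp : 3 ≤ p) : FixSet p id true = Obd := by
  ext z
  exact ⟨fun hz => hz.2.1, fun hz => ⟨obd_subset_sp hp hz, hz, rfl⟩⟩

theorem fixSet_id_false : FixSet p id false = Sp p := by
  ext z
  exact ⟨fun hz => hz.1, fun hz => ⟨hz, rfl⟩⟩

theorem fixSet_finite_of_fixed_eq {g : ℝ × ℝ → ℝ × ℝ} {c : ℝ × ℝ} (hg : ∀ z, g z = z → z = c)
    (s : Bool) : (FixSet p g s).Finite :=
  (finite_singleton c).subset fun z hz => hg z (fixSet_subset g s hz)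

theorem fixSet_finite_and_cantor_of_axis (hp : 3 ≤ p) (hodd : Odd p) {g : ℝ × ℝ → ℝ × ℝ}
    {ℓ : ℝ → ℝ × ℝ} {q : ℝ × ℝ → ℝ} (hℓ : Continuous ℓ) (hq : Continuous q) (hqℓ : LeftInverse q ℓ)
    (hfix : ∀ z, g z = z ↔ z ∈ range ℓ) (hO : ∀ t, ℓ t ∈ Obd → t = 0 ∨ t = 1)
    (hS : ∀ t, ℓ t ∈ Sp p ↔ t ∈ midCantor p) :
    (FixSet p g true).Finite ∧ Nonempty (FixSet p g false ≃ₜ (ℕ → Bool)) := by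
  constructor
  · refine ((toFinite {(0 : ℝ), 1}).image ℓ).subset fun z ⟨_, hzO, hz⟩ => ?_
    obtain ⟨t, rfl⟩ := (hfix z).mp hz
    exact ⟨t, hO t hzO, rfl⟩
  · have himage : FixSet p g false = ℓ '' midCantor p := by
      ext z
      refine ⟨fun ⟨hzS, hz⟩ => ?_, ?_⟩
      · obtain ⟨t, rfl⟩ := (hfix z).mp hz
        exact ⟨t, (hS t).mp hzS, rfl⟩
      · rintro ⟨t, ht, rfl⟩
        exact ⟨(hS t).mpr ht, (hfix _).mpr ⟨t, rfl⟩⟩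
    obtain ⟨e⟩ := Real.nonempty_homeomorph_cantorSpace isCompact_midCantor
      ⟨0, zero_mem_midCantor hp⟩ (preperfect_midCantor hp) (interior_midCantor hp hodd)
    rw [himage]
    exact ⟨((hqℓ.isEmbedding hq hℓ).homeomorphImage _).symm.trans e⟩

theorem fixSet_diagonal (hp : 3 ≤ p) (hodd : Odd p) :
    (FixSet p (fun z => (z.2, z.1)) true).Finite ∧
      Nonempty (FixSet p (fun z => (z.2, z.1)) false ≃ₜ (ℕ → Bool)) := by
  refine fixSet_finite_and_cantor_of_axis hp hodd (ℓ := fun t => (t, t)) (by fun_prop) continuous_fst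
    (fun _ => rfl) (fun ⟨x, y⟩ => ?_) (fun t ⟨_, h⟩ => ?_) fun t => spPair_self_iff hp
  · refine ⟨fun h => ⟨x, ?_⟩, fun ⟨t, ht⟩ => ht ▸ rfl⟩
    simp only [Prod.mk.injEq] at h
    simp [h.2]
  · rcases h with h | h | h | h <;> simp only at h <;> simp [h]

theorem fixSet_antidiagonal (hp : 3 ≤ p) (hodd : Odd p) :
    (FixSet p (fun z => (1 - z.2, 1 - z.1)) true).Finite ∧
      Nonempty (FixSet p (fun z => (1 - z.2, 1 - z.1)) false ≃ₜ (ℕ → Bool)) := by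
  refine fixSet_finite_and_cantor_of_axis hp hodd (ℓ := fun t => (t, 1 - t)) (by fun_prop) continuous_fst
    (fun _ => rfl) (fun ⟨x, y⟩ => ?_) (fun t ⟨_, h⟩ => ?_) fun t => spPair_one_sub_iff hp hodd
  · refine ⟨fun h => ⟨x, ?_⟩, fun ⟨t, ht⟩ => ht ▸ by simp⟩
    simp only [Prod.mk.injEq] at h
    simp [h.2]
  · rcases h with h | h | h | h <;> simp only at h
    exacts [.inl h, .inr h, .inr (by linarith), .inl (by linarith)]

theorem fixSet_vertical (hp : 3 ≤ p) (hodd : Odd p) :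
    (FixSet p (fun z => (1 - z.1, z.2)) true).Finite ∧
      Nonempty (FixSet p (fun z => (1 - z.1, z.2)) false ≃ₜ (ℕ → Bool)) := by
  refine fixSet_finite_and_cantor_of_axis hp hodd (ℓ := fun t => (1 / 2, t)) (by fun_prop) continuous_snd
    (fun _ => rfl) (fun ⟨x, y⟩ => ?_) (fun t ⟨_, h⟩ => ?_) fun t => spPair_half_iff hp hodd
  · refine ⟨fun h => ⟨y, ?_⟩, fun ⟨t, ht⟩ => ht ▸ by norm_num⟩
    have := (Prod.ext_iff.mp h).1
    simp only at this
    rw [show x = 1 / 2 by linarith]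
  · rcases h with h | h | h | h <;> simp only at h <;> norm_num at h
    exacts [.inl h, .inr h]

theorem fixSet_horizontal (hp : 3 ≤ p) (hodd : Odd p) :
    (FixSet p (fun z => (z.1, 1 - z.2)) true).Finite ∧
      Nonempty (FixSet p (fun z => (z.1, 1 - z.2)) false ≃ₜ (ℕ → Bool)) := by
  refine fixSet_finite_and_cantor_of_axis hp hodd (ℓ := fun t => (t, 1 / 2)) (by fun_prop) continuous_fst
    (fun _ => rfl) (fun ⟨x, y⟩ => ?_) (fun t ⟨_, h⟩ => ?_)
    fun t => spPair_comm.trans (spPair_half_iff hp hodd)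
  · refine ⟨fun h => ⟨x, ?_⟩, fun ⟨t, ht⟩ => ht ▸ by norm_num⟩
    have := (Prod.ext_iff.mp h).2
    simp only at this
    rw [show y = 1 / 2 by linarith]
  · rcases h with h | h | h | h <;> simp only at h <;> norm_num at h
    exacts [.inl h, .inr h]

theorem fixSet_classification (hp : 3 ≤ p) (hodd : Odd p) {g : ℝ × ℝ → ℝ × ℝ} (hg : g ∈ D4set)
    (s : Bool) (hR : ¬(g = id ∧ s = true)) :
    (FixSet p g s).Finite ∨ Nonempty (FixSet p g s ≃ₜ (ℕ → Bool)) ∨ FixSet p g s = Sp p := by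
  have hrot : ∀ {g : ℝ × ℝ → ℝ × ℝ}, (∀ z, g z = z → z = (1 / 2, 1 / 2)) →
      (FixSet p g s).Finite ∨ Nonempty (FixSet p g s ≃ₜ (ℕ → Bool)) ∨ FixSet p g s = Sp p :=
    fun hg => .inl (fixSet_finite_of_fixed_eq hg s)
  have hrefl : ∀ {g : ℝ × ℝ → ℝ × ℝ},
      (FixSet p g true).Finite ∧ Nonempty (FixSet p g false ≃ₜ (ℕ → Bool)) →
      (FixSet p g s).Finite ∨ Nonempty (FixSet p g s ≃ₜ (ℕ → Bool)) ∨ FixSet p g s = Sp p := by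
    intro g ⟨hfin, hcantor⟩
    cases s
    exacts [.inr (.inl hcantor), .inl hfin]
  simp only [D4set, mem_insert_iff, mem_singleton_iff] at hg
  rcases hg with rfl | rfl | rfl | rfl | rfl | rfl | rfl | rfl
  · cases s
    exacts [.inr (.inr fixSet_id_false), absurd ⟨rfl, rfl⟩ hR]
  iterate 3
    refine hrot fun z hz => ?_
    simp only [Prod.ext_iff] at hz ⊢
    constructor <;> linarith [hz.1, hz.2]
  exacts [hrefl (fixSet_diagonal hp hodd), hrefl (fixSet_vertical hp hodd),
    hrefl (fixSet_horizontal hp hodd), hrefl (fixSet_antidiagonal hp hodd)]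

end Carpet

/-- Among the 16 isometries of the doubled carpet `D_p` (the 8 square symmetries acting
on both faces, together with their compositions with the face-swapping involution `R`),
the only one whose fixed point set is a Jordan curve is `R` itself (`g = id`,
`s = true`), and its fixed point set is the outer circle `O`; every other one has fixed
point set that is finite (possibly empty), homeomorphic to the Cantor set, or all of
`D_p`. -/
theorem stmt19 (p : ℕ) (hp : 3 ≤ p) (hodd : Odd p) :
    ∀ g ∈ D4set, ∀ s : Bool,
      (IsJordanCurve (FixSet p g s) ↔ (g = id ∧ s = true)) ∧
      ((g = id ∧ s = true) → FixSet p g s = Obd) ∧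
      (¬(g = id ∧ s = true) →
        (FixSet p g s).Finite ∨ Nonempty (↥(FixSet p g s) ≃ₜ (ℕ → Bool)) ∨
          FixSet p g s = Sp p) := by
  intro g hg s
  refine ⟨⟨fun hJ => ?_, ?_⟩, ?_, Carpet.fixSet_classification hp hodd hg s⟩
  · by_contra hR
    rcases Carpet.fixSet_classification hp hodd hg s hR with hfin | hcantor | hSp
    · exact hJ.not_isTotallyDisconnected hfin.countable.isTotallyDisconnected
    · obtain ⟨e⟩ := hcantor
      have := e.symm.totallyDisconnectedSpace
      exact hJ.not_isTotallyDisconnected (totallyDisconnectedSpace_subtype_iff.mp this)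
    · rw [hSp] at hJ
      exact Carpet.sp_not_subset_obd hp
        (hJ.eq_of_subset isJordanCurve_obd (Carpet.obd_subset_sp hp)).symm.subset
  · rintro ⟨rfl, rfl⟩
    rw [Carpet.fixSet_id_true hp]
    exact isJordanCurve_obd
  · rintro ⟨rfl, rfl⟩
    exact Carpet.fixSet_id_true hp
end
end
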